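/- arXiv:hep-th/0406190 — 7 statements merged into one kernel-verified Lean document; each statement's English description precedes it below -/
import Mathlib

section
/- Assume M ≥ 2, sinh η ≠ 0, and that the chain is homogeneous, ξa = η/2 for all a. Let H = Σ_{m=1}^{M} (σ^x_m σ^x_{m+1} + σ^y_m σ^y_{m+1} + cosh η (σ^z_m σ^z_{m+1} − 1)) with periodic boundary conditions σ^α_{M+1} = σ^α_1, where σ^α_m acts as the Pauli matrix σ^α on the m-th tensor factor of H = (ℂ²)^{⊗M}. Then the transfer matrix 𝒯(η/2) is invertible, and there exists a constant c ∈ ℂ such that H = 2 sinh η · 𝒯′(η/2) ∘ 𝒯(η/2)^{-1} + c·Id_H, where 𝒯′ denotes the (entrywise) derivative of the map λ ↦ 𝒯(λ). -/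
open Complex Matrix BigOperators

noncomputable section

/-- Spin configurations of an `M`-site chain: the index set of the basis of `H = (ℂ²)^{⊗M}`. -/
abbrev Spins (M : ℕ) := Fin M → Fin 2

/-- The XXZ R-matrix `R(λ)` on `ℂ² ⊗ ℂ²` (with anisotropy parameter `η`). -/
def Rmat (η lam : ℂ) : Matrix (Fin 2 × Fin 2) (Fin 2 × Fin 2) ℂ :=
  fun p q =>
    if p = q then (if p.1 = p.2 then Complex.sinh (lam + η) else Complex.sinh lam)
    else if p.1 = q.2 ∧ p.2 = q.1 then Complex.sinh η else 0

/-- The L-operator `L_m(λ) = R_{0m}(λ - ξ_m)` acting on `ℂ² ⊗ H`. -/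
def Lop (M : ℕ) (η : ℂ) (ξ : Fin M → ℂ) (m : Fin M) (lam : ℂ) :
    Matrix (Fin 2 × Spins M) (Fin 2 × Spins M) ℂ :=
  fun p q => Rmat η (lam - ξ m) (p.1, p.2 m) (q.1, q.2 m) *
    (if ∀ k, k ≠ m → p.2 k = q.2 k then 1 else 0)

/-- The monodromy matrix `T(λ) = L_M(λ) ⋯ L_2(λ) L_1(λ)` on `ℂ² ⊗ H`. -/
def Tmono (M : ℕ) (η : ℂ) (ξ : Fin M → ℂ) (lam : ℂ) :
    Matrix (Fin 2 × Spins M) (Fin 2 × Spins M) ℂ :=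
  ((List.ofFn (fun m : Fin M => Lop M η ξ m lam)).reverse).prod

/-- The operator `A(λ)` on `H`. -/
def Aop (M : ℕ) (η : ℂ) (ξ : Fin M → ℂ) (lam : ℂ) : Matrix (Spins M) (Spins M) ℂ :=
  fun s t => Tmono M η ξ lam (0, s) (0, t)

/-- The operator `B(λ)` on `H`. -/
def Bop (M : ℕ) (η : ℂ) (ξ : Fin M → ℂ) (lam : ℂ) : Matrix (Spins M) (Spins M) ℂ :=
  fun s t => Tmono M η ξ lam (0, s) (1, t)

/-- The operator `C(λ)` on `H`. -/
def Cop (M : ℕ) (η : ℂ) (ξ : Fin M → ℂ) (lam : ℂ) : Matrix (Spins M) (Spins M) ℂ :=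
  fun s t => Tmono M η ξ lam (1, s) (0, t)

/-- The operator `D(λ)` on `H`. -/
def Dop (M : ℕ) (η : ℂ) (ξ : Fin M → ℂ) (lam : ℂ) : Matrix (Spins M) (Spins M) ℂ :=
  fun s t => Tmono M η ξ lam (1, s) (1, t)

/-- The twisted transfer matrix `𝒯_κ(μ) = A(μ) + κ D(μ)`. -/
def transferK (M : ℕ) (η : ℂ) (ξ : Fin M → ℂ) (κ : ℂ) (μ : ℂ) : Matrix (Spins M) (Spins M) ℂ :=
  Aop M η ξ μ + κ • Dop M η ξ μ

/-- The transfer matrix `𝒯(μ) = A(μ) + D(μ)`. -/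
def transfer (M : ℕ) (η : ℂ) (ξ : Fin M → ℂ) (μ : ℂ) : Matrix (Spins M) (Spins M) ℂ :=
  transferK M η ξ 1 μ

/-- The reference state `|0⟩` with all spins up. -/
def vac (M : ℕ) : Spins M → ℂ := fun s => if s = fun _ => (0 : Fin 2) then 1 else 0

/-- `⟨0| X |0⟩`. -/
def expectVac {M : ℕ} (X : Matrix (Spins M) (Spins M) ℂ) : ℂ :=
  dotProduct (vac M) (X.mulVec (vac M))

/-- `B(λ_1) ⋯ B(λ_N)`. -/
def Bprod (M : ℕ) (η : ℂ) (ξ : Fin M → ℂ) {N : ℕ} (lam : Fin N → ℂ) :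
    Matrix (Spins M) (Spins M) ℂ :=
  (List.ofFn (fun j : Fin N => Bop M η ξ (lam j))).prod

/-- `C(λ_1) ⋯ C(λ_N)`. -/
def Cprod (M : ℕ) (η : ℂ) (ξ : Fin M → ℂ) {N : ℕ} (lam : Fin N → ℂ) :
    Matrix (Spins M) (Spins M) ℂ :=
  (List.ofFn (fun j : Fin N => Cop M η ξ (lam j))).prod

/-- `a(λ) = ∏_a sinh(λ - ξ_a + η)`. -/
def aF (M : ℕ) (η : ℂ) (ξ : Fin M → ℂ) (lam : ℂ) : ℂ := ∏ a, Complex.sinh (lam - ξ a + η)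

/-- `d(λ) = ∏_a sinh(λ - ξ_a)`. -/
def dF (M : ℕ) (ξ : Fin M → ℂ) (lam : ℂ) : ℂ := ∏ a, Complex.sinh (lam - ξ a)

/-- `Y_κ(μ|{λ})`. -/
def Yk (M : ℕ) (η : ℂ) (ξ : Fin M → ℂ) (κ : ℂ) {N : ℕ} (lam : Fin N → ℂ) (μ : ℂ) : ℂ :=
  aF M η ξ μ * ∏ k, Complex.sinh (lam k - μ + η) +
    κ * dF M ξ μ * ∏ k, Complex.sinh (lam k - μ - η)

/-- `Y_κ(λ_j|{λ})` regarded as a function of all the variables `λ_1, …, λ_N`. -/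
def YFull (M : ℕ) (η : ℂ) (ξ : Fin M → ℂ) (κ : ℂ) {N : ℕ} (v : Fin N → ℂ) (j : Fin N) : ℂ :=
  Yk M η ξ κ v (v j)

/-- The eigenvalue `τ_κ(μ|{λ})` of the twisted transfer matrix. -/
def tauK (M : ℕ) (η : ℂ) (ξ : Fin M → ℂ) (κ : ℂ) {N : ℕ} (lam : Fin N → ℂ) (μ : ℂ) : ℂ :=
  aF M η ξ μ * ∏ k, (Complex.sinh (lam k - μ + η) / Complex.sinh (lam k - μ)) +
    κ * dF M ξ μ * ∏ k, (Complex.sinh (μ - lam k + η) / Complex.sinh (μ - lam k))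

/-- `t(λ,μ) = sinh η / (sinh(λ-μ) sinh(λ-μ+η))`. -/
def tfun (η lam μ : ℂ) : ℂ :=
  Complex.sinh η / (Complex.sinh (lam - μ) * Complex.sinh (lam - μ + η))

/-- The matrix `Ω_κ({λ},{μ}|{ν})`. -/
def Omega (M : ℕ) (η : ℂ) (ξ : Fin M → ℂ) (κ : ℂ) {n n' : ℕ}
    (lam : Fin n → ℂ) (mu : Fin n → ℂ) (nu : Fin n' → ℂ) : Matrix (Fin n) (Fin n) ℂ :=
  fun j k =>
    aF M η ξ (mu k) * tfun η (lam j) (mu k) * ∏ a, Complex.sinh (nu a - mu k + η) -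
      κ * dF M ξ (mu k) * tfun η (mu k) (lam j) * ∏ a, Complex.sinh (nu a - mu k - η)

/-- Pauli matrix `σ^x`. -/
def sigmaX : Matrix (Fin 2) (Fin 2) ℂ := !![0, 1; 1, 0]
/-- Pauli matrix `σ^y`. -/
def sigmaY : Matrix (Fin 2) (Fin 2) ℂ := !![0, -Complex.I; Complex.I, 0]
/-- Pauli matrix `σ^z`. -/
def sigmaZ : Matrix (Fin 2) (Fin 2) ℂ := !![1, 0; 0, -1]

/-- The local operator acting as `P` on the `m`-th site and as identity elsewhere. -/
def pauliAt (M : ℕ) (P : Matrix (Fin 2) (Fin 2) ℂ) (m : Fin M) : Matrix (Spins M) (Spins M) ℂ :=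
  fun s t => P (s m) (t m) * (if ∀ k, k ≠ m → s k = t k then 1 else 0)

/-- The generating operator `Q^κ_{i,m} = ∏_{n=i}^{m} ((1+κ)/2 + ((1-κ)/2) σ^z_n)`
(sites are 1-based: site `n` is the tensor factor of index `n-1`). -/
def Qop (M : ℕ) (κ : ℂ) (i m : ℕ) : Matrix (Spins M) (Spins M) ℂ :=
  (((Finset.univ.filter (fun n : Fin M => i ≤ n.val + 1 ∧ n.val + 1 ≤ m)).sort (· ≤ ·)).map
    (fun n => ((1 + κ)/2) • (1 : Matrix (Spins M) (Spins M) ℂ) +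
      ((1 - κ)/2) • pauliAt M sigmaZ n)).prod

/-- Cyclic successor on `Fin M`. -/
def cyc {M : ℕ} (m : Fin M) : Fin M := ⟨(m.val + 1) % M, Nat.mod_lt _ m.pos⟩


/-- The XXZ Hamiltonian (at `h = 0`) with periodic boundary conditions and `Δ = cosh η`. -/
def Ham (M : ℕ) (η : ℂ) : Matrix (Spins M) (Spins M) ℂ :=
  ∑ m : Fin M,
    (pauliAt M sigmaX m * pauliAt M sigmaX (cyc m) +
     pauliAt M sigmaY m * pauliAt M sigmaY (cyc m) +
     Complex.cosh η • (pauliAt M sigmaZ m * pauliAt M sigmaZ (cyc m) - 1))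


/-! At `λ = ξ_m` the R-matrix is `sinh η` times the flip of `ℂ² ⊗ ℂ²`. Regard the auxiliary space
as site `0` of an extended chain of `M + 1` sites. In the homogeneous chain every `L_m(η/2)` is then
`sinh η` times the transposition of the sites `0` and `m + 1`, so `T(η/2)` is `sinh^M η` times the
cyclic rotation of the extended chain, whose partial trace is the lattice shift `U` of the periodic
chain. The derivative `∂_λ L_m(η/2)` is the bond `(0, m + 1)` times the same transposition. Moving
the transpositions to the right relabels the bonds, and the product rule gives
`T'(η/2) = sinh^(M-1) η · (the ring of bonds of the extended chain, except (0, 1)) · rotation`.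
Its partial trace is `sinh^(M-1) η · (∑_m bond(m, m+1)) · U`, so
`2 sinh η · 𝒯'(η/2) 𝒯(η/2)⁻¹ = 2 ∑_m bond(m, m+1)`, which is `H + 2 M cosh η`. -/

open Equiv

lemma forall_iff_apply_and_forall_ne {β : Type*} (P : β → Prop) (m : β) :
    (∀ k, P k) ↔ P m ∧ ∀ k, k ≠ m → P k :=
  ⟨fun h => ⟨h m, fun k _ => h k⟩, fun h k => by
    by_cases hk : k = m
    · exact hk ▸ h.1
    · exact h.2 k hk⟩

lemma eq_iff_pair_eq_and_forall_ne {ι α : Type*} (i j : ι) (f g : ι → α) :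
    f = g ↔ (f i, f j) = (g i, g j) ∧ ∀ k, k ≠ i → k ≠ j → f k = g k := by
  constructor
  · rintro rfl
    exact ⟨rfl, fun _ _ _ => rfl⟩
  · rintro ⟨hp, h⟩
    funext k
    by_cases hi : k = i
    · exact hi ▸ congrArg Prod.fst hp
    by_cases hj : k = j
    · exact hj ▸ congrArg Prod.snd hp
    exact h k hi hj

lemma sum_fin_cons {N : ℕ} {α β : Type*} [Fintype α] [AddCommMonoid β]
    (f : (Fin (N + 1) → α) → β) : ∑ x, f x = ∑ a, ∑ s, f (Fin.cons a s) :=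
  ((Fin.consEquiv fun _ => α).sum_comp f).symm.trans (Fintype.sum_prod_type _)

section FinTuple

variable {N : ℕ} {α : Type*}

lemma Fin.eq_iff_zero_succ (m : Fin N) (x y : Fin (N + 1) → α) :
    x = y ↔ (x 0, x m.succ) = (y 0, y m.succ) ∧ ∀ k, k ≠ m → x k.succ = y k.succ := by
  rw [funext_iff, Fin.forall_fin_succ, forall_iff_apply_and_forall_ne _ m, Prod.ext_iff, and_assoc]

lemma Fin.eq_comp_swap_succ_succ_iff (i j : Fin N) (x y : Fin (N + 1) → α) :
    y = x ∘ swap i.succ j.succ ↔ x 0 = y 0 ∧ Fin.tail y = Fin.tail x ∘ swap i j := by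
  simp only [funext_iff, Fin.forall_fin_succ, Function.comp_apply, Fin.tail,
    ← Fin.succ_injective _ |>.map_swap]
  rw [swap_apply_of_ne_of_ne (Fin.succ_ne_zero i).symm (Fin.succ_ne_zero j).symm, eq_comm]

lemma Fin.cons_comp_swap_zero_succ (a : α) (s : Fin N → α) (k : Fin N) :
    (Fin.cons a s : Fin (N + 1) → α) ∘ swap 0 k.succ = Fin.cons (s k) (Function.update s k a) := by
  ext i
  cases i using Fin.cases with
  | zero => simp
  | succ i =>
    rcases eq_or_ne i k with rfl | h
    · simp
    · simp [swap_apply_of_ne_of_ne (Fin.succ_ne_zero i) (Fin.succ_injective _ |>.ne h), h]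

lemma Fin.eq_comp_swap_zero_succ_iff (m : Fin N) (x y : Fin (N + 1) → α) :
    y = x ∘ swap 0 m.succ ↔
      (y 0, y m.succ) = (x 0, x m.succ).swap ∧ ∀ k, k ≠ m → x k.succ = y k.succ := by
  conv_lhs => rw [← Fin.cons_self_tail x, Fin.cons_comp_swap_zero_succ, ← Fin.cons_self_tail y,
    Fin.cons_inj, Function.eq_update_iff]
  simp only [Fin.tail, Prod.ext_iff, Prod.fst_swap, Prod.snd_swap, and_assoc]
  exact and_congr_right' (and_congr_right' (forall₂_congr fun _ _ => eq_comm))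

end FinTuple

lemma Fin.cycleRange_succ_eq_swap_mul {N : ℕ} (i : Fin N) :
    Fin.cycleRange i.succ = swap 0 i.succ * Fin.cycleRange i.castSucc := by
  ext j : 1
  rw [Perm.mul_apply]
  rcases lt_trichotomy j i.castSucc with h | rfl | h
  · have hj : (j + 1 : Fin (N + 1)).val = j.val + 1 :=
      Fin.val_add_one_of_lt (h.trans_le (Fin.le_last _))
    have hji : j.val < i.val := h
    rw [Fin.cycleRange_of_lt h, Fin.cycleRange_of_lt (h.trans (Fin.castSucc_lt_succ (i := i))),
      swap_apply_of_ne_of_ne] <;> simp only [ne_eq, Fin.ext_iff, hj, Fin.val_zero, Fin.val_succ]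
      <;> omega
  · rw [Fin.cycleRange_self, swap_apply_left, Fin.cycleRange_of_lt (Fin.castSucc_lt_succ (i := i)),
      Fin.coeSucc_eq_succ]
  · rw [Fin.cycleRange_of_gt h]
    rcases eq_or_ne j i.succ with rfl | hne
    · simp
    · have hgt : i.succ < j := lt_of_le_of_ne (Fin.castSucc_lt_iff_succ_le.mp h) hne.symm
      rw [Fin.cycleRange_of_gt hgt, swap_apply_of_ne_of_ne (Fin.pos_iff_ne_zero.mp
        ((Fin.succ_pos i).trans hgt)) hne]

lemma Equiv.Perm.decomposeFin_symm_eq_swap_mul {N : ℕ} (p : Fin (N + 1)) (σ : Perm (Fin N)) :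
    Perm.decomposeFin.symm (p, σ) = swap 0 p * Perm.decomposeFin.symm (0, σ) := by
  ext i : 1
  cases i using Fin.cases <;> simp

lemma hasDerivAt_matrix_mul_apply {𝕜 l m n : Type*} [NontriviallyNormedField 𝕜] [Fintype m]
    {A : 𝕜 → Matrix l m 𝕜} {B : 𝕜 → Matrix m n 𝕜} {A' : Matrix l m 𝕜} {B' : Matrix m n 𝕜} {z : 𝕜}
    (hA : ∀ i j, HasDerivAt (fun w => A w i j) (A' i j) z)
    (hB : ∀ j k, HasDerivAt (fun w => B w j k) (B' j k) z) (i : l) (k : n) :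
    HasDerivAt (fun w => (A w * B w) i k) ((A' * B z + A z * B') i k) z := by
  simp only [mul_apply, Matrix.add_apply, ← Finset.sum_add_distrib]
  exact HasDerivAt.fun_sum fun j _ => (hA i j).fun_mul (hB j k)

section Relabel

variable {ι α R : Type*} [Fintype ι] [DecidableEq ι] [Fintype α] [DecidableEq α] [Semiring R]

variable (α R) in
def permOp : Perm ι →* Matrix (ι → α) (ι → α) R where
  toFun π := of fun x y => if y = x ∘ π then 1 else 0
  map_one' := by
    ext x y
    simp [one_apply, eq_comm]
  map_mul' π σ := by
    ext x z
    simp only [of_apply, mul_apply, ite_mul, one_mul, zero_mul]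
    simp [Function.comp_assoc]
    -- the two sides differ only in their `Decidable` instances
    congr

lemma permOp_apply (π : Perm ι) (x y : ι → α) :
    permOp α R π x y = if y = x ∘ π then 1 else 0 := rfl

lemma diagonal_mul_permOp (d : (ι → α) → R) (π : Perm ι) :
    diagonal d * permOp α R π = permOp α R π * diagonal fun y => d (y ∘ ⇑π⁻¹) := by
  ext x y
  rw [diagonal_mul, mul_diagonal, permOp_apply]
  split_ifs with h
  · subst h
    simp [Function.comp_assoc]
  · simp

/-- For `c = cosh η`, the operator `P_{ij} ∂_λ R_{ij}(0)` on the sites `i` and `j`. -/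
def bondOp (c : R) (i j : ι) : Matrix (ι → α) (ι → α) R :=
  permOp α R (swap i j) * diagonal fun x => if x i = x j then c else 1

lemma bondOp_comm (c : R) (i j : ι) : bondOp (α := α) c i j = bondOp c j i := by
  simp only [bondOp, swap_comm i j, eq_comm]

lemma permOp_mul_bondOp (π : Perm ι) (c : R) (i j : ι) :
    permOp α R π * bondOp c i j = bondOp c (π i) (π j) * permOp α R π := by
  rw [bondOp, bondOp, swap_apply_apply, Matrix.mul_assoc, diagonal_mul_permOp,
    ← Matrix.mul_assoc, ← Matrix.mul_assoc, ← map_mul, ← map_mul, inv_mul_cancel_right]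
  simp [Function.comp_apply]

lemma diagonal_eq_bondOp_mul (c : R) (i j : ι) :
    (diagonal fun x : ι → α => if x i = x j then c else 1) =
      bondOp c i j * permOp α R (swap i j) := by
  rw [bondOp, Matrix.mul_assoc, diagonal_mul_permOp, ← Matrix.mul_assoc, ← map_mul,
    Equiv.swap_mul_self, map_one, Matrix.one_mul]
  simp [swap_inv, eq_comm]

end Relabel

section TwoSite

variable {ι α R : Type*} [Fintype ι] [DecidableEq ι] [DecidableEq α] [Semiring R]

def twoSite (i j : ι) : Matrix (α × α) (α × α) R →ₗ[R] Matrix (ι → α) (ι → α) R where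
  toFun K := of fun x y => K (x i, x j) (y i, y j) * if ∀ k, k ≠ i → k ≠ j → x k = y k then 1 else 0
  map_add' K L := by
    ext
    exact add_mul _ _ _
  map_smul' c K := by
    ext
    exact mul_assoc _ _ _

lemma twoSite_apply (i j : ι) (K : Matrix (α × α) (α × α) R) (x y : ι → α) :
    twoSite i j K x y =
      K (x i, x j) (y i, y j) * if ∀ k, k ≠ i → k ≠ j → x k = y k then 1 else 0 := rfl

lemma twoSite_one (i j : ι) : twoSite i j (1 : Matrix (α × α) (α × α) R) = 1 := by
  ext x y
  rw [twoSite_apply, one_apply, one_apply, ite_zero_mul_ite_zero, one_mul]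
  exact if_congr (eq_iff_pair_eq_and_forall_ne i j x y).symm rfl rfl

def bondMatrix (c : R) : Matrix (α × α) (α × α) R :=
  of fun p q => if q = p.swap then (if p.1 = p.2 then c else 1) else 0

variable [Fintype α] in
lemma bondOp_eq_twoSite (c : R) (i j : ι) :
    bondOp (α := α) c i j = twoSite i j (bondMatrix c) := by
  ext x y
  rw [bondOp, mul_diagonal, permOp_apply, twoSite_apply, bondMatrix, of_apply]
  simp only [eq_iff_pair_eq_and_forall_ne i j y, Function.comp_apply, swap_apply_left,
    swap_apply_right, Prod.swap_prod_mk]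
  have hrest : (∀ k, k ≠ i → k ≠ j → y k = x (swap i j k)) ↔ ∀ k, k ≠ i → k ≠ j → x k = y k :=
    forall₃_congr fun k hi hj => by rw [swap_apply_of_ne_of_ne hi hj, eq_comm]
  rw [if_congr (and_congr_right' hrest) rfl rfl]
  by_cases hp : (y i, y j) = (x j, x i)
  · obtain ⟨hi, hj⟩ := Prod.mk.inj hp
    by_cases hr : ∀ k, k ≠ i → k ≠ j → x k = y k
    · rw [if_pos ⟨hp, hr⟩, if_pos hp, if_pos hr, one_mul, mul_one]
      exact if_congr (by rw [hi, hj, eq_comm]) rfl rfl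
    · rw [if_neg (fun h => hr h.2), if_neg hr, zero_mul, mul_zero]
  · rw [if_neg (fun h => hp h.1), if_neg hp, zero_mul, zero_mul]

end TwoSite

section AuxiliarySite

variable {N : ℕ} {α R : Type*} [Fintype α] [Semiring R]

def traceAux :
    Matrix (Fin (N + 1) → α) (Fin (N + 1) → α) R →ₗ[R] Matrix (Fin N → α) (Fin N → α) R where
  toFun X := of fun s t => ∑ a, X (Fin.cons a s) (Fin.cons a t)
  map_add' X Y := by
    ext
    simp [Finset.sum_add_distrib]
  map_smul' c X := by
    ext
    simp [Finset.mul_sum]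

lemma traceAux_apply (X : Matrix (Fin (N + 1) → α) (Fin (N + 1) → α) R) (s t : Fin N → α) :
    traceAux X s t = ∑ a, X (Fin.cons a s) (Fin.cons a t) := rfl

variable [DecidableEq α]

def extendAux (A : Matrix (Fin N → α) (Fin N → α) R) :
    Matrix (Fin (N + 1) → α) (Fin (N + 1) → α) R :=
  of fun x y => if x 0 = y 0 then A (Fin.tail x) (Fin.tail y) else 0

lemma traceAux_extendAux_mul (A : Matrix (Fin N → α) (Fin N → α) R) (X) :
    traceAux (extendAux A * X) = A * traceAux X := by
  ext s t
  simp only [traceAux_apply, extendAux, of_apply, mul_apply, sum_fin_cons, Fin.cons_zero,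
    Fin.tail_cons, ite_mul, zero_mul, Finset.mul_sum]
  simp only [Finset.sum_ite_irrel, Finset.sum_const_zero, Finset.sum_ite_eq, Finset.mem_univ,
    if_true]
  exact Finset.sum_comm

lemma traceAux_mul_extendAux (X) (B : Matrix (Fin N → α) (Fin N → α) R) :
    traceAux (X * extendAux B) = traceAux X * B := by
  ext s t
  simp only [traceAux_apply, extendAux, of_apply, mul_apply, sum_fin_cons, Fin.cons_zero,
    Fin.tail_cons, mul_ite, mul_zero, Finset.sum_mul]
  simp only [Finset.sum_ite_irrel, Finset.sum_const_zero, Finset.sum_ite_eq', Finset.mem_univ,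
    if_true]
  exact Finset.sum_comm

lemma traceAux_permOp_swap_zero_succ (k : Fin N) :
    traceAux (permOp α R (swap 0 k.succ)) = 1 := by
  ext s t
  simp only [traceAux_apply, permOp_apply, Fin.cons_comp_swap_zero_succ, Fin.cons_inj, ite_and,
    one_apply]
  rw [Finset.sum_ite_eq' Finset.univ (s k), if_pos (Finset.mem_univ _), Function.update_eq_self]
  exact if_congr eq_comm rfl rfl

lemma bondOp_succ_succ (c : R) (i j : Fin N) :
    bondOp (α := α) c i.succ j.succ = extendAux (bondOp c i j) := by
  ext x y
  simp only [bondOp, mul_diagonal, permOp_apply, extendAux, of_apply,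
    Fin.eq_comp_swap_succ_succ_iff, ite_and, Fin.tail]
  split_ifs <;> simp_all

lemma permOp_decomposeFin_symm (p : Fin (N + 1)) (σ : Perm (Fin N)) :
    permOp α R (Perm.decomposeFin.symm (p, σ)) =
      permOp α R (swap 0 p) * extendAux (permOp α R σ) := by
  rw [Equiv.Perm.decomposeFin_symm_eq_swap_mul, map_mul]
  congr 1
  ext x y
  simp only [permOp_apply, extendAux, of_apply, funext_iff, Fin.forall_fin_succ,
    Function.comp_apply, Fin.tail, Perm.decomposeFin_symm_apply_zero,
    Perm.decomposeFin_symm_apply_succ, swap_self, Equiv.refl_apply, ite_and, eq_comm]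

lemma permOp_finRotate_succ :
    permOp α R (finRotate (N + 1)) =
      permOp α R (swap 0 1) * extendAux (permOp α R (finRotate N)) := by
  rw [finRotate_succ_eq_decomposeFin, permOp_decomposeFin_symm]

lemma traceAux_permOp_finRotate :
    traceAux (permOp α R (finRotate (N + 2))) = permOp α R (finRotate (N + 1)) := by
  rw [permOp_finRotate_succ, traceAux_mul_extendAux, ← Fin.succ_zero_eq_one,
    traceAux_permOp_swap_zero_succ, Matrix.one_mul]

end AuxiliarySite

section PartialHamiltonian

variable {n : ℕ} {α R : Type*} [Fintype α] [DecidableEq α] [Semiring R]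

/-- The ring `0, 1, …, m + 1` of the extended chain without its bond `(0, 1)`. -/
def partialHam (c : R) (m : Fin (n + 1)) : Matrix (Fin (n + 2) → α) (Fin (n + 2) → α) R :=
  bondOp c 0 m.succ + ∑ k : Fin n with k.castSucc < m, bondOp c k.castSucc.succ k.succ.succ

lemma bondOp_mul_add_permOp_mul_partialHam (c : R) (i : Fin n) :
    bondOp c 0 i.succ.succ * permOp α R (swap 0 i.succ.succ) +
        permOp α R (swap 0 i.succ.succ) * partialHam c i.castSucc =
      partialHam c i.succ * permOp α R (swap 0 i.succ.succ) := by
  have hfilter : (Finset.univ.filter fun k : Fin n => k.castSucc < i.succ) =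
      insert i (Finset.univ.filter fun k : Fin n => k.castSucc < i.castSucc) := by
    ext k
    simp [Fin.castSucc_lt_succ_iff, le_iff_lt_or_eq, or_comm]
  have hcomm : ∀ k : Fin n, k.castSucc < i.castSucc →
      permOp α R (swap 0 i.succ.succ) * bondOp c k.castSucc.succ k.succ.succ =
        bondOp c k.castSucc.succ k.succ.succ * permOp α R (swap 0 i.succ.succ) := by
    intro k hk
    have hki : k.val < i.val := hk
    rw [permOp_mul_bondOp, swap_apply_of_ne_of_ne, swap_apply_of_ne_of_ne] <;>
      simp only [ne_eq, Fin.ext_iff, Fin.val_succ, Fin.val_castSucc, Fin.val_zero] <;> omega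
  rw [partialHam, partialHam, hfilter, Finset.sum_insert (by simp), Matrix.mul_add,
    permOp_mul_bondOp, swap_apply_left, swap_apply_of_ne_of_ne (Fin.succ_ne_zero _)
      (Fin.succ_injective _ |>.ne (Fin.castSucc_lt_succ (i := i)).ne), Finset.mul_sum,
    Finset.sum_congr rfl fun k hk => hcomm k (Finset.mem_filter.mp hk).2, ← Finset.sum_mul,
    bondOp_comm c i.succ.succ, Fin.succ_castSucc]
  simp only [Matrix.add_mul]

lemma sum_bondOp_finRotate (c : R) :
    ∑ m : Fin (n + 1), bondOp (α := α) c m (finRotate (n + 1) m) =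
      bondOp c 0 (Fin.last n) + ∑ k : Fin n, bondOp c k.castSucc k.succ := by
  rw [Fin.sum_univ_castSucc, finRotate_last, bondOp_comm c (Fin.last n) 0,
    add_comm _ (bondOp _ _ _)]
  simp only [finRotate_apply, Fin.coeSucc_eq_succ]

lemma traceAux_partialHam_mul_finRotate (c : R) (hn : n ≠ 0) :
    traceAux (partialHam c (Fin.last n) * permOp α R (finRotate (n + 2))) =
      (∑ m : Fin (n + 1), bondOp c m (finRotate (n + 1) m)) * permOp α R (finRotate (n + 1)) := by
  have hlast : (Fin.last n).succ ≠ 1 := by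
    simp [Fin.ext_iff, hn]
  have hboundary : bondOp c 0 (Fin.last n).succ * permOp α R (swap 0 1) =
      permOp α R (swap 0 1) * extendAux (bondOp c 0 (Fin.last n)) := by
    rw [← bondOp_succ_succ, permOp_mul_bondOp, Fin.succ_zero_eq_one, swap_apply_right,
      swap_apply_of_ne_of_ne (Fin.succ_ne_zero _) hlast]
  have hswap : traceAux (permOp α R (swap (0 : Fin (n + 2)) 1)) = 1 := by
    rw [← Fin.succ_zero_eq_one, traceAux_permOp_swap_zero_succ]
  have hbulk : (Finset.univ.filter fun k : Fin n => k.castSucc < Fin.last n) = Finset.univ := by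
    simp [Fin.castSucc_lt_last]
  rw [partialHam, hbulk, permOp_finRotate_succ, sum_bondOp_finRotate, Matrix.add_mul,
    Matrix.add_mul, map_add]
  congr 1
  · rw [← Matrix.mul_assoc, hboundary, traceAux_mul_extendAux, traceAux_mul_extendAux, hswap,
      Matrix.one_mul]
  · rw [Finset.sum_mul, map_sum, Finset.sum_mul]
    refine Finset.sum_congr rfl fun k _ => ?_
    rw [bondOp_succ_succ, traceAux_extendAux_mul, traceAux_mul_extendAux, hswap, Matrix.one_mul]

end PartialHamiltonian

lemma Rmat_zero_apply (η : ℂ) (p q : Fin 2 × Fin 2) :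
    Rmat η 0 p q = if q = p.swap then Complex.sinh η else 0 := by
  obtain ⟨a, b⟩ := p
  obtain ⟨c, d⟩ := q
  fin_cases a <;> fin_cases b <;> fin_cases c <;> fin_cases d <;> simp [Rmat]

lemma hasDerivAt_Rmat_apply (η μ : ℂ) (p q : Fin 2 × Fin 2) :
    HasDerivAt (fun μ => Rmat η μ p q)
      (if p = q then (if p.1 = p.2 then Complex.cosh (μ + η) else Complex.cosh μ) else 0) μ := by
  unfold Rmat
  split_ifs
  · simpa using ((hasDerivAt_id μ).add_const η).csinh
  · simpa using (hasDerivAt_id μ).csinh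
  · exact hasDerivAt_const _ _
  · exact hasDerivAt_const _ _

/-- The basis of `ℂ² ⊗ H` as the configurations of an extended chain whose site `0` is the
auxiliary space and whose site `m + 1` is the site `m` of `H`. -/
abbrev withAux (M : ℕ) : Fin 2 × Spins M ≃ (Fin (M + 1) → Fin 2) := Fin.consEquiv fun _ => Fin 2

section LOperator

variable {M : ℕ} (η : ℂ) (ξ : Fin M → ℂ) (m : Fin M)

lemma reindex_Lop_apply (lam : ℂ) (x y : Fin (M + 1) → Fin 2) :
    reindex (withAux M) (withAux M) (Lop M η ξ m lam) x y =
      Rmat η (lam - ξ m) (x 0, x m.succ) (y 0, y m.succ) *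
        if ∀ k, k ≠ m → x k.succ = y k.succ then 1 else 0 := rfl

lemma reindex_Lop_self :
    reindex (withAux M) (withAux M) (Lop M η ξ m (ξ m)) =
      Complex.sinh η • permOp (Fin 2) ℂ (swap 0 m.succ) := by
  ext x y
  rw [reindex_Lop_apply, sub_self, Rmat_zero_apply, Matrix.smul_apply, permOp_apply,
    ite_zero_mul_ite_zero, mul_one, smul_eq_mul, mul_ite, mul_one, mul_zero]
  simp only [Fin.eq_comp_swap_zero_succ_iff]

lemma hasDerivAt_reindex_Lop (x y : Fin (M + 1) → Fin 2) :
    HasDerivAt (fun lam => reindex (withAux M) (withAux M) (Lop M η ξ m lam) x y)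
      (diagonal (fun x => if x 0 = x m.succ then Complex.cosh η else 1) x y) (ξ m) := by
  have hR := (hasDerivAt_Rmat_apply η (ξ m - ξ m) (x 0, x m.succ) (y 0, y m.succ)).comp_sub_const
    (ξ m) (ξ m)
  refine (hR.mul_const (if ∀ k, k ≠ m → x k.succ = y k.succ then 1 else 0)).congr_deriv ?_
  simp only [diagonal_apply, sub_self, zero_add, Complex.cosh_zero, Fin.eq_iff_zero_succ m x y]
  rw [ite_zero_mul_ite_zero, mul_one]

end LOperator

section Monodromy

variable (M : ℕ) (η : ℂ) (ξ : Fin M → ℂ)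

def partialMonodromy (k : ℕ) (lam : ℂ) : Matrix (Fin (M + 1) → Fin 2) (Fin (M + 1) → Fin 2) ℂ :=
  ((List.ofFn fun m => reindex (withAux M) (withAux M) (Lop M η ξ m lam)).take k).reverse.prod

lemma partialMonodromy_zero (lam : ℂ) : partialMonodromy M η ξ 0 lam = 1 := by
  simp [partialMonodromy]

lemma partialMonodromy_succ (m : Fin M) (lam : ℂ) :
    partialMonodromy M η ξ (m + 1) lam =
      reindex (withAux M) (withAux M) (Lop M η ξ m lam) * partialMonodromy M η ξ m lam := by
  simp [partialMonodromy, List.take_add_one]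

lemma partialMonodromy_length (lam : ℂ) :
    partialMonodromy M η ξ M lam = reindex (withAux M) (withAux M) (Tmono M η ξ lam) := by
  rw [partialMonodromy, Tmono, List.take_of_length_le (by simp), ← coe_reindexAlgEquiv ℂ ℂ,
    map_list_prod, List.map_reverse, List.map_ofFn]
  rfl

end Monodromy

section Homogeneous

variable (η z : ℂ)

lemma partialMonodromy_const_self {M : ℕ} (i : Fin (M + 1)) :
    partialMonodromy M η (fun _ => z) i z =
      Complex.sinh η ^ (i : ℕ) • permOp (Fin 2) ℂ (Fin.cycleRange i) := by
  induction i using Fin.induction with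
  | zero => simp [partialMonodromy_zero]
  | succ i ih =>
    rw [Fin.val_succ, partialMonodromy_succ, reindex_Lop_self, ← Fin.val_castSucc, ih,
      Fin.cycleRange_succ_eq_swap_mul, map_mul, smul_mul_smul_comm, ← pow_succ']

lemma hasDerivAt_partialMonodromy_const {n : ℕ} (m : Fin (n + 1)) (x y : Fin (n + 2) → Fin 2) :
    HasDerivAt (fun lam => partialMonodromy (n + 1) η (fun _ => z) (m + 1) lam x y)
      ((Complex.sinh η ^ (m : ℕ) • partialHam (Complex.cosh η) m *
          permOp (Fin 2) ℂ (Fin.cycleRange m.succ) : Matrix (Spins (n + 2)) (Spins (n + 2)) ℂ)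
        x y) z := by
  induction m using Fin.induction generalizing x y with
  | zero =>
    simp only [partialMonodromy_succ]
    simp only [Fin.val_zero, partialMonodromy_zero, Matrix.mul_one, pow_zero, one_smul]
    convert hasDerivAt_reindex_Lop η (fun _ => z) 0 x y using 2
    rw [diagonal_eq_bondOp_mul, partialHam, Fin.cycleRange_succ_eq_swap_mul, Fin.castSucc_zero,
      Fin.cycleRange_zero, mul_one]
    simp
  | succ i ih =>
    have hval : (i.succ : ℕ) = (i.castSucc : ℕ) + 1 := rfl
    simp only [partialMonodromy_succ]
    simp only [hval]
    refine (hasDerivAt_matrix_mul_apply (hasDerivAt_reindex_Lop η (fun _ => z) i.succ) ih x y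
      ).congr_deriv ?_
    rw [← Fin.val_succ, partialMonodromy_const_self, reindex_Lop_self, diagonal_eq_bondOp_mul]
    conv_rhs => rw [Fin.cycleRange_succ_eq_swap_mul i.succ, ← Fin.succ_castSucc, map_mul,
      ← Matrix.mul_assoc, smul_mul_assoc, ← bondOp_mul_add_permOp_mul_partialHam, Fin.val_succ]
    simp only [smul_mul_assoc, mul_smul_comm, Matrix.add_mul, smul_add, smul_smul,
      Matrix.mul_assoc, Fin.val_succ, pow_succ]

end Homogeneous

lemma hasDerivAt_traceAux_apply {𝕜 α : Type*} [NontriviallyNormedField 𝕜] [Fintype α] {N : ℕ}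
    {F : 𝕜 → Matrix (Fin (N + 1) → α) (Fin (N + 1) → α) 𝕜}
    {F' : Matrix (Fin (N + 1) → α) (Fin (N + 1) → α) 𝕜} {z : 𝕜}
    (hF : ∀ x y, HasDerivAt (fun w => F w x y) (F' x y) z) (s t : Fin N → α) :
    HasDerivAt (fun w => traceAux (F w) s t) (traceAux F' s t) z := by
  simp only [traceAux_apply]
  exact HasDerivAt.fun_sum fun a _ => hF _ _

lemma transfer_eq_traceAux (M : ℕ) (η : ℂ) (ξ : Fin M → ℂ) (μ : ℂ) :
    transfer M η ξ μ = traceAux (reindex (withAux M) (withAux M) (Tmono M η ξ μ)) := by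
  ext s t
  simp [transfer, transferK, Aop, Dop, traceAux_apply, Fin.sum_univ_two]

section TransferMatrix

variable {n : ℕ} (η z : ℂ)

lemma transfer_const_self :
    transfer (n + 1) η (fun _ => z) z =
      Complex.sinh η ^ (n + 1) • permOp (Fin 2) ℂ (finRotate (n + 1)) := by
  have h := partialMonodromy_const_self η z (Fin.last (n + 1))
  rw [Fin.val_last, Fin.cycleRange_last] at h
  rw [transfer_eq_traceAux, ← partialMonodromy_length, h, map_smul, traceAux_permOp_finRotate]

lemma hasDerivAt_transfer_const (hn : n ≠ 0) (s t : Spins (n + 1)) :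
    HasDerivAt (fun lam => transfer (n + 1) η (fun _ => z) lam s t)
      ((Complex.sinh η ^ n • (∑ m, bondOp (Complex.cosh η) m (finRotate (n + 1) m)) *
          permOp (Fin 2) ℂ (finRotate (n + 1)) : Matrix (Spins (n + 1)) (Spins (n + 1)) ℂ)
        s t) z := by
  have h := hasDerivAt_traceAux_apply (hasDerivAt_partialMonodromy_const η z (Fin.last n)) s t
  rw [Fin.succ_last, Fin.cycleRange_last, smul_mul_assoc, map_smul,
    traceAux_partialHam_mul_finRotate _ hn, ← smul_mul_assoc] at h
  simpa only [Fin.val_last, partialMonodromy_length, ← transfer_eq_traceAux] using h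

end TransferMatrix

open scoped Kronecker

section Pauli

variable {M : ℕ}

lemma pauliAt_mul_pauliAt (P Q : Matrix (Fin 2) (Fin 2) ℂ) {i j : Fin M} (hij : i ≠ j) :
    pauliAt M P i * pauliAt M Q j = twoSite i j (P ⊗ₖ Q) := by
  ext s t
  rw [mul_apply, Finset.sum_eq_single (Function.update s i (t i)), twoSite_apply, kronecker_apply]
  · have h1 : ∀ k, k ≠ i → s k = Function.update s i (t i) k :=
      fun k hk => (Function.update_of_ne hk _ _).symm
    have h2 : (∀ k, k ≠ j → Function.update s i (t i) k = t k) ↔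
        ∀ k, k ≠ i → k ≠ j → s k = t k := by
      refine ⟨fun h k hi hj => Function.update_of_ne hi (t i) s ▸ h k hj, fun h k hj => ?_⟩
      by_cases hi : k = i
      · rw [hi, Function.update_self]
      · rw [Function.update_of_ne hi]
        exact h k hi hj
    simp only [pauliAt, Function.update_self, Function.update_of_ne hij.symm]
    rw [if_pos h1, mul_one, mul_assoc]
    by_cases h : ∀ k, k ≠ i → k ≠ j → s k = t k
    · rw [if_pos (h2.mpr h), if_pos h]
    · rw [if_neg (mt h2.mp h), if_neg h]
  · intro u _ hu
    simp only [pauliAt]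
    by_cases h1 : ∀ k, k ≠ i → s k = u k
    · by_cases h2 : ∀ k, k ≠ j → u k = t k
      · refine absurd (funext fun k => ?_) hu
        by_cases hi : k = i
        · rw [hi, Function.update_self, h2 i hij]
        · rw [Function.update_of_ne hi, h1 k hi]
      · rw [if_neg h2, mul_zero, mul_zero]
    · rw [if_neg h1, mul_zero, zero_mul]
  · simp

lemma kronecker_pauli_sum_eq_bondMatrix (c : ℂ) :
    sigmaX ⊗ₖ sigmaX + sigmaY ⊗ₖ sigmaY + c • (sigmaZ ⊗ₖ sigmaZ - 1) =
      (2 : ℂ) • bondMatrix c - (2 * c) • (1 : Matrix (Fin 2 × Fin 2) (Fin 2 × Fin 2) ℂ) := by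
  ext ⟨a, b⟩ ⟨a', b'⟩
  fin_cases a <;> fin_cases b <;> fin_cases a' <;> fin_cases b' <;>
    simp [sigmaX, sigmaY, sigmaZ, bondMatrix, one_apply] <;> ring

lemma cyc_eq_finRotate (m : Fin M) : cyc m = finRotate M m := by
  obtain ⟨n, rfl⟩ : ∃ n, M = n + 1 := ⟨M - 1, by have := m.pos; omega⟩
  ext
  simp [cyc, finRotate_apply, Fin.val_add]

lemma finRotate_ne_self (hM : 2 ≤ M) (m : Fin M) : finRotate M m ≠ m := by
  obtain ⟨n, rfl⟩ : ∃ n, M = n + 1 := ⟨M - 1, by omega⟩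
  rw [finRotate_apply, Ne, add_eq_left, Fin.one_eq_zero_iff]
  omega

lemma Ham_eq_sum_bondOp (hM : 2 ≤ M) (η : ℂ) :
    Ham M η = (2 : ℂ) • ∑ m, bondOp (Complex.cosh η) m (finRotate M m) -
      (2 * M * Complex.cosh η) • (1 : Matrix (Spins M) (Spins M) ℂ) := by
  have hbond : ∀ m : Fin M,
      pauliAt M sigmaX m * pauliAt M sigmaX (finRotate M m) +
          pauliAt M sigmaY m * pauliAt M sigmaY (finRotate M m) +
        Complex.cosh η • (pauliAt M sigmaZ m * pauliAt M sigmaZ (finRotate M m) - 1) =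
      (2 : ℂ) • bondOp (Complex.cosh η) m (finRotate M m) - (2 * Complex.cosh η) • 1 := by
    intro m
    have hne := (finRotate_ne_self hM m).symm
    rw [pauliAt_mul_pauliAt _ _ hne, pauliAt_mul_pauliAt _ _ hne, pauliAt_mul_pauliAt _ _ hne,
      ← twoSite_one m (finRotate M m), ← map_sub, ← map_smul, ← map_add, ← map_add,
      kronecker_pauli_sum_eq_bondMatrix, map_sub, map_smul, map_smul, twoSite_one,
      bondOp_eq_twoSite]
  simp only [Ham, cyc_eq_finRotate, hbond, Finset.sum_sub_distrib, ← Finset.smul_sum,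
    Finset.sum_const, Finset.card_univ, Fintype.card_fin, ← Nat.cast_smul_eq_nsmul ℂ, smul_smul]
  ring_nf

end Pauli

/-- Trace identity: for the homogeneous chain (`ξ_a = η/2`) the Hamiltonian is obtained
from the logarithmic derivative of the transfer matrix at `λ = η/2`. -/
theorem trace_identity (M : ℕ) (hM : 2 ≤ M) (η : ℂ) (hη : Complex.sinh η ≠ 0)
    (T' : Matrix (Spins M) (Spins M) ℂ)
    (hT' : ∀ s t : Spins M,
      HasDerivAt (fun lam => transfer M η (fun _ => η / 2) lam s t) (T' s t) (η / 2)) :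
    IsUnit (transfer M η (fun _ => η / 2) (η / 2)) ∧
      ∃ c : ℂ, Ham M η =
        (2 * Complex.sinh η) • (T' * (transfer M η (fun _ => η / 2) (η / 2))⁻¹) + c • 1 := by
  obtain ⟨n, rfl⟩ : ∃ n, M = n + 1 := ⟨M - 1, by omega⟩
  set T := transfer (n + 1) η (fun _ => η / 2) (η / 2)
  set H := ∑ m, bondOp (α := Fin 2) (Complex.cosh η) m (finRotate (n + 1) m)
  have hT : T = Complex.sinh η ^ (n + 1) • permOp (Fin 2) ℂ (finRotate (n + 1)) :=
    transfer_const_self η (η / 2)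
  have hTunit : IsUnit T := by
    have := ((Group.isUnit (finRotate (n + 1))).map (permOp (Fin 2) ℂ)).smul
      (Units.mk0 _ (pow_ne_zero (n + 1) hη))
    rwa [Units.smul_def, Units.val_mk0, ← hT] at this
  have hT'eq : T' = (Complex.sinh η)⁻¹ • (H * T) := by
    ext s t
    refine (hT' s t).unique ((hasDerivAt_transfer_const η (η / 2) (by omega) s t).congr_deriv ?_)
    rw [hT, mul_smul_comm, smul_smul, smul_mul_assoc, pow_succ', inv_mul_cancel_left₀ hη]
  refine ⟨hTunit, -(2 * ((n + 1 : ℕ) : ℂ) * Complex.cosh η), ?_⟩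
  rw [Ham_eq_sum_bondOp hM, hT'eq, smul_mul_assoc,
    mul_nonsing_inv_cancel_right _ _ ((isUnit_iff_isUnit_det T).mp hTunit), smul_smul,
    mul_inv_cancel_right₀ hη, neg_smul, sub_eq_add_neg]

end
end

section
/- (Quantum inverse scattering problem.) For every M ≥ 1, every ξ1,…,ξM ∈ ℂ, every j ∈ {1,…,M} and every α ∈ {x,y,z}, one has the operator identity on H: [∏_{k=1}^{j−1} 𝒯(ξk)] · tr_0[(σ^α ⊗ Id_H) T(ξj)] = σ^α_j · ∏_{k=1}^{j} 𝒯(ξk), where tr_0 denotes the partial trace over the auxiliary space V0 = ℂ², σ^α in the left-hand side acts in V0, and σ^α_j acts as the Pauli matrix σ^α on the j-th tensor factor of H and as identity elsewhere. -/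
open Complex Matrix BigOperators

noncomputable section

/-- Partial trace over the auxiliary space `V_0 = ℂ²`. -/
def ptrace0 {M : ℕ} (X : Matrix (Fin 2 × Spins M) (Fin 2 × Spins M) ℂ) :
    Matrix (Spins M) (Spins M) ℂ :=
  fun s t => ∑ i : Fin 2, X (i, s) (i, t)

/-- `P ⊗ Id_H` acting on `ℂ² ⊗ H`. -/
def kron0 {M : ℕ} (P : Matrix (Fin 2) (Fin 2) ℂ) :
    Matrix (Fin 2 × Spins M) (Fin 2 × Spins M) ℂ :=
  fun p q => P p.1 q.1 * (if p.2 = q.2 then 1 else 0)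

/-!
At `λ = ξ_j` the factor `R_{0j}(0) = sinh η · P_{0j}` of the monodromy matrix is a multiple of
the permutation `P_{0j}` exchanging the auxiliary space with site `j`. Moving `P_{0j}` through the
other factors turns every `R_{0k}(ξ_j - ξ_k)` into the operator `R_{jk}(ξ_j - ξ_k)` on `H`, so
(numbering sites from `0`)
`tr_0[(σ ⊗ 1) T(ξ_j)] = sinh η · R_{j,j-1} ⋯ R_{j,0} · σ_j · R_{j,M-1} ⋯ R_{j,j+1}`,
and for `σ = 1` this factorises `𝒯(ξ_j)`. By unitarity, `R_{ab}(λ) R_{ba}(-λ)` is a scalar, so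
`𝒯(ξ_0) ⋯ 𝒯(ξ_{n-1})` is a multiple of `∏_{k<n} R_{k,M-1} ⋯ R_{k,n}`, and the same cancellation
absorbs `R_{j,j-1} ⋯ R_{j,0}` into `∏_{k<j} R_{k,M-1} ⋯ R_{k,j}`, leaving a multiple of
`∏_{k<j} R_{k,M-1} ⋯ R_{k,j+1}`. This product does not touch site `j`, so `σ_j` moves to the
front, and both sides of the identity become the same multiple of the same operator: no
invertibility of the transfer matrices is needed.
-/

namespace QuantumInverseScattering

open scoped Kronecker
open Fin.NatCast

section OrderedProduct

variable {α : Type*} [Monoid α]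

def descProd (g : ℕ → α) (a b : ℕ) : α :=
  ((List.range' a (b - a)).reverse.map g).prod

@[simp] lemma descProd_self (g : ℕ → α) (a : ℕ) : descProd g a a = 1 := by
  simp [descProd]

lemma descProd_succ_self (g : ℕ → α) (a : ℕ) : descProd g a (a + 1) = g a := by
  simp [descProd]

lemma descProd_mul_descProd (g : ℕ → α) {a b c : ℕ} (hab : a ≤ b) (hbc : b ≤ c) :
    descProd g b c * descProd g a b = descProd g a c := by
  obtain ⟨m, rfl⟩ := Nat.exists_eq_add_of_le hab
  obtain ⟨n, rfl⟩ := Nat.exists_eq_add_of_le hbc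
  rw [descProd, descProd, descProd, show a + m + n - (a + m) = n by omega,
    show a + m + n - a = m + n by omega, ← List.range'_append_1, List.reverse_append,
    List.map_append, List.prod_append, Nat.add_sub_cancel_left]

lemma descProd_eq_mul_mul (g : ℕ → α) {a b c : ℕ} (hab : a ≤ b) (hbc : b < c) :
    descProd g a c = descProd g (b + 1) c * g b * descProd g a b := by
  rw [← descProd_mul_descProd g hab hbc.le, ← descProd_mul_descProd g b.le_succ hbc,
    descProd_succ_self, mul_assoc]

lemma map_descProd {β : Type*} [Monoid β] (f : α →* β) (g : ℕ → α) (a b : ℕ) :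
    f (descProd g a b) = descProd (f ∘ g) a b := by
  simp [descProd, map_list_prod, List.map_map]

lemma semiconjBy_list_prod_map {β : Type*} {x : α} {g h : β → α} {l : List β}
    (H : ∀ r ∈ l, SemiconjBy x (g r) (h r)) :
    SemiconjBy x (l.map g).prod (l.map h).prod := by
  induction l with
  | nil => exact SemiconjBy.one_right x
  | cons r l ih =>
    simpa using (H r (by simp)).mul_right (ih fun r hr => H r (by simp [hr]))

lemma semiconjBy_descProd {x : α} {g h : ℕ → α} {a b : ℕ}
    (H : ∀ r, a ≤ r → r < b → SemiconjBy x (g r) (h r)) :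
    SemiconjBy x (descProd g a b) (descProd h a b) :=
  semiconjBy_list_prod_map fun r hr => by
    rw [List.mem_reverse, List.mem_range'_1] at hr
    exact H r hr.1 (by omega)

lemma commute_descProd {x : α} {g : ℕ → α} {a b : ℕ}
    (H : ∀ r, a ≤ r → r < b → Commute x (g r)) : Commute x (descProd g a b) :=
  semiconjBy_descProd H

end OrderedProduct

section LocalOperator

variable {ι σ R : Type*} [DecidableEq ι] [Fintype ι] [DecidableEq σ] [CommSemiring R]
  {S T : Finset ι} {Z W : Matrix (ι → σ) (ι → σ) R}

/-- `Z = Z_S ⊗ 1`: its entries depend only on the spins in `S`, and it is diagonal in the spins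
outside `S`. -/
def SupportedIn (S : Finset ι) (Z : Matrix (ι → σ) (ι → σ) R) : Prop :=
  ∀ s t r, Z s t = if ∀ k ∉ S, s k = t k then Z (S.piecewise s r) (S.piecewise t r) else 0

namespace SupportedIn

lemma apply_eq_zero (hZ : SupportedIn S Z) {s t : ι → σ} (h : ∃ k ∉ S, s k ≠ t k) :
    Z s t = 0 := by
  rw [hZ s t s, if_neg (by simpa using h)]

lemma apply_congr (hZ : SupportedIn S Z) {s t s' t' : ι → σ}
    (hs : ∀ k ∈ S, s k = s' k) (ht : ∀ k ∈ S, t k = t' k)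
    (h : ∀ k ∉ S, s k = t k) (h' : ∀ k ∉ S, s' k = t' k) : Z s t = Z s' t' := by
  rw [hZ s t s, hZ s' t' s, if_pos h, if_pos h', S.piecewise_congr hs (fun _ _ => rfl),
    S.piecewise_congr ht (fun _ _ => rfl)]

variable [Fintype σ]

lemma mul_apply (hZ : SupportedIn S Z) (hW : SupportedIn T W) (hST : Disjoint S T)
    (s t : ι → σ) : (Z * W) s t = Z s (S.piecewise t s) * W (S.piecewise t s) t := by
  refine (Matrix.mul_apply).trans (Finset.sum_eq_single _ (fun u _ hu => ?_) (by simp))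
  by_contra hne
  have hZu := left_ne_zero_of_mul hne
  have hWu := right_ne_zero_of_mul hne
  refine hu (funext fun k => ?_)
  by_cases hk : k ∈ S
  · rw [S.piecewise_eq_of_mem _ _ hk]
    by_contra h
    exact hWu (hW.apply_eq_zero ⟨k, Finset.disjoint_left.mp hST hk, h⟩)
  · rw [S.piecewise_eq_of_notMem _ _ hk]
    by_contra h
    exact hZu (hZ.apply_eq_zero ⟨k, hk, Ne.symm h⟩)

theorem commute (hZ : SupportedIn S Z) (hW : SupportedIn T W) (hST : Disjoint S T) :
    Commute Z W := by
  ext s t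
  rw [hZ.mul_apply hW hST, hW.mul_apply hZ hST.symm]
  by_cases h : ∀ k ∉ S, k ∉ T → s k = t k
  · have hS : ∀ k ∈ S, k ∉ T := fun k hk => Finset.disjoint_left.mp hST hk
    rw [mul_comm]
    congr 1
    · refine hW.apply_congr (fun k hk => ?_) (fun k hk => ?_) (fun k hk => ?_) (fun k hk => ?_) <;>
        by_cases hkS : k ∈ S <;> simp_all [Finset.piecewise]
    · refine hZ.apply_congr (fun k hk => ?_) (fun k hk => ?_) (fun k hk => ?_) (fun k hk => ?_) <;>
        by_cases hkT : k ∈ T <;> simp_all [Finset.piecewise]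
  · push Not at h
    obtain ⟨k, hkS, hkT, hk⟩ := h
    have hW0 : W (S.piecewise t s) t = 0 :=
      hW.apply_eq_zero ⟨k, hkT, by rwa [S.piecewise_eq_of_notMem _ _ hkS]⟩
    have hZ0 : Z (T.piecewise t s) t = 0 :=
      hZ.apply_eq_zero ⟨k, hkS, by rwa [T.piecewise_eq_of_notMem _ _ hkT]⟩
    rw [hW0, hZ0, mul_zero, mul_zero]

end SupportedIn

def twoSite (Q : Matrix (σ × σ) (σ × σ) R) (a b : ι) : Matrix (ι → σ) (ι → σ) R :=
  fun s t => Q (s a, s b) (t a, t b) * if ∀ k, k ≠ a → k ≠ b → s k = t k then 1 else 0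

lemma twoSite_supportedIn (Q : Matrix (σ × σ) (σ × σ) R) (a b : ι) :
    SupportedIn {a, b} (twoSite Q a b) := by
  intro s t r
  simp only [twoSite, Finset.mem_insert, Finset.mem_singleton, not_or, and_imp]
  split_ifs <;> simp_all [Finset.piecewise]

lemma twoSite_swap (Q : Matrix (σ × σ) (σ × σ) R) (a b : ι) :
    twoSite Q a b = twoSite (Q.submatrix Prod.swap Prod.swap) b a := by
  ext s t
  simp only [twoSite, submatrix_apply, Prod.swap_prod_mk]
  congr 2
  exact propext (forall_congr' fun _ => imp.swap)

def pairSplit {a b : ι} (hab : a ≠ b) : (ι → σ) ≃ (σ × σ) × ({k // k ≠ a ∧ k ≠ b} → σ) where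
  toFun s := ((s a, s b), fun k => s k)
  invFun p k := if ha : k = a then p.1.1 else if hb : k = b then p.1.2 else p.2 ⟨k, ha, hb⟩
  left_inv s := by
    funext k
    by_cases ha : k = a
    · subst ha; simp
    · by_cases hb : k = b
      · subst hb; simp [ha]
      · simp [ha, hb]
  right_inv p := by
    ext k
    · simp
    · simp [hab.symm]
    · simp [k.2.1, k.2.2]

lemma twoSite_eq_submatrix (Q : Matrix (σ × σ) (σ × σ) R) {a b : ι} (hab : a ≠ b) :
    twoSite Q a b = (Q ⊗ₖ 1).submatrix (pairSplit hab) (pairSplit hab) := by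
  ext s t
  simp only [twoSite, submatrix_apply, kronecker_apply, one_apply, pairSplit, Equiv.coe_fn_mk]
  congr 2
  simp [funext_iff, and_imp]

lemma twoSite_smul_one (c : R) {a b : ι} (hab : a ≠ b) :
    twoSite (c • 1 : Matrix (σ × σ) (σ × σ) R) a b = c • 1 := by
  rw [twoSite_eq_submatrix _ hab, smul_kronecker, one_kronecker_one]
  ext s t
  simp [one_apply, (pairSplit hab).injective.eq_iff]

lemma twoSite_mul [Fintype σ] (Q Q' : Matrix (σ × σ) (σ × σ) R) {a b : ι} (hab : a ≠ b) :
    twoSite Q a b * twoSite Q' a b = twoSite (Q * Q') a b := by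
  rw [twoSite_eq_submatrix _ hab, twoSite_eq_submatrix _ hab, twoSite_eq_submatrix _ hab,
    submatrix_mul_equiv, ← mul_kronecker_mul, mul_one]

end LocalOperator

section Kronecker

variable {l n α : Type*} [Fintype l] [DecidableEq l] [Fintype n] [CommSemiring α]

variable (l) in
def oneKroneckerHom [DecidableEq n] : Matrix n n α →* Matrix (l × n) (l × n) α where
  toFun Z := 1 ⊗ₖ Z
  map_one' := one_kronecker_one
  map_mul' Z W := by rw [← mul_kronecker_mul, mul_one]

lemma one_kronecker_descProd [DecidableEq n] (g : ℕ → Matrix n n α) (a b : ℕ) :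
    (1 : Matrix l l α) ⊗ₖ descProd g a b = descProd (fun r => 1 ⊗ₖ g r) a b :=
  map_descProd (oneKroneckerHom l) g a b

lemma commute_one_kronecker {Z : Matrix n n α} {X : Matrix (l × n) (l × n) α}
    (h : ∀ a b, Commute Z (X.submatrix (Prod.mk a) (Prod.mk b))) : Commute (1 ⊗ₖ Z) X := by
  ext ⟨a, s⟩ ⟨b, t⟩
  have := congrFun (congrFun (h a b) s) t
  simpa [mul_apply, Fintype.sum_prod_type, one_apply, ite_mul] using this

end Kronecker

lemma sinh_add_mul_sinh_sub (x y : ℂ) :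
    Complex.sinh (x + y) * Complex.sinh (x - y) = Complex.sinh x ^ 2 - Complex.sinh y ^ 2 := by
  rw [Complex.sinh_add, Complex.sinh_sub]
  linear_combination Complex.sinh x ^ 2 * Complex.cosh_sq y - Complex.sinh y ^ 2 * Complex.cosh_sq x

lemma Rmat_mul_Rmat_neg (η lam : ℂ) :
    Rmat η lam * Rmat η (-lam) = (Complex.sinh (η + lam) * Complex.sinh (η - lam)) • 1 := by
  have h := sinh_add_mul_sinh_sub η lam
  ext ⟨a, b⟩ ⟨c, d⟩
  fin_cases a <;> fin_cases b <;> fin_cases c <;> fin_cases d <;>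
    simp [Rmat, mul_apply, Fintype.sum_prod_type, one_apply, Complex.sinh_neg, add_comm lam η,
      neg_add_eq_sub, h] <;> ring

lemma Rmat_submatrix_swap (η lam : ℂ) :
    (Rmat η lam).submatrix Prod.swap Prod.swap = Rmat η lam := by
  ext ⟨a, b⟩ ⟨c, d⟩
  fin_cases a <;> fin_cases b <;> fin_cases c <;> fin_cases d <;> simp [Rmat]

lemma Rmat_zero_apply (η : ℂ) (p q : Fin 2 × Fin 2) :
    Rmat η 0 p q = if p = q.swap then Complex.sinh η else 0 := by
  fin_cases p <;> fin_cases q <;> simp [Rmat]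

lemma twoSite_Rmat_mul_twoSite_Rmat {ι : Type*} [DecidableEq ι] [Fintype ι] (η lam : ℂ) {a b : ι}
    (hab : a ≠ b) :
    twoSite (Rmat η lam) a b * twoSite (Rmat η (-lam)) b a =
      (Complex.sinh (η + lam) * Complex.sinh (η - lam)) • 1 := by
  rw [twoSite_swap (Rmat η (-lam)) b a, Rmat_submatrix_swap, twoSite_mul _ _ hab,
    Rmat_mul_Rmat_neg, twoSite_smul_one _ hab]

variable {M : ℕ}

lemma pauliAt_supportedIn (P : Matrix (Fin 2) (Fin 2) ℂ) (m : Fin M) :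
    SupportedIn {m} (pauliAt M P m) := by
  intro s t r
  simp only [pauliAt, Finset.mem_singleton]
  split_ifs <;> simp_all [Finset.piecewise]

lemma pauliAt_one (m : Fin M) : pauliAt M 1 m = 1 := by
  ext s t
  by_cases h : s = t
  · subst h; simp [pauliAt]
  · have hne : ¬(s m = t m ∧ ∀ k, k ≠ m → s k = t k) := fun ⟨hm, hk⟩ =>
      h (funext fun k => if e : k = m then e ▸ hm else hk k e)
    simp only [pauliAt, one_apply, h, if_false]
    split_ifs with h1 h2 <;> simp_all

/-- The permutation `P_{0j}` of the basis of `ℂ² ⊗ H` exchanging the auxiliary spin with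
spin `j`. -/
def auxSwap (j : Fin M) : Equiv.Perm (Fin 2 × Spins M) :=
  Function.Involutive.toPerm (fun p => (p.2 j, Function.update p.2 j p.1)) fun p => by simp

lemma auxSwap_apply (j : Fin M) (p : Fin 2 × Spins M) :
    auxSwap j p = (p.2 j, Function.update p.2 j p.1) := rfl

lemma auxSwap_symm (j : Fin M) : (auxSwap j).symm = auxSwap j :=
  Function.Involutive.toPerm_symm _

lemma auxSwap_auxSwap (j : Fin M) (p : Fin 2 × Spins M) : auxSwap j (auxSwap j p) = p :=
  Function.Involutive.toPerm_involutive _ p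

lemma Lop_self (η : ℂ) (ξ : Fin M → ℂ) (j : Fin M) :
    Lop M η ξ j (ξ j) = Complex.sinh η • (auxSwap j).permMatrix ℂ := by
  ext ⟨a, s⟩ ⟨b, t⟩
  simp only [Lop, sub_self, Rmat_zero_apply, Matrix.smul_apply, PEquiv.toMatrix_apply,
    Equiv.toPEquiv_apply, Option.mem_def, Option.some.injEq, auxSwap_apply, Prod.ext_iff,
    Prod.fst_swap, Prod.snd_swap, eq_comm (a := Function.update _ _ _), Function.eq_update_iff]
  split_ifs <;> simp_all

lemma Lop_submatrix_auxSwap (η : ℂ) (ξ : Fin M → ℂ) {j k : Fin M} (hkj : k ≠ j) (lam : ℂ) :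
    (Lop M η ξ k lam).submatrix (auxSwap j) (auxSwap j) =
      1 ⊗ₖ twoSite (Rmat η (lam - ξ k)) j k := by
  ext ⟨a, s⟩ ⟨b, t⟩
  have key : (∀ l, l ≠ k → Function.update s j a l = Function.update t j b l) ↔
      a = b ∧ ∀ l, l ≠ j → l ≠ k → s l = t l :=
    ⟨fun h => ⟨by simpa using h j hkj.symm, fun l hj hk => by simpa [hj] using h l hk⟩,
      fun ⟨hab, h⟩ l hl => by
        by_cases hlj : l = j
        · subst hlj; simp [hab]
        · simp [hlj, h l hlj hl]⟩
  simp only [submatrix_apply, Lop, twoSite, kronecker_apply, one_apply, auxSwap_apply,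
    Function.update_of_ne hkj, key]
  split_ifs <;> simp_all

lemma permMatrix_auxSwap_mul_Lop (η : ℂ) (ξ : Fin M → ℂ) {j k : Fin M} (hkj : k ≠ j) (lam : ℂ) :
    (auxSwap j).permMatrix ℂ * Lop M η ξ k lam =
      (1 ⊗ₖ twoSite (Rmat η (lam - ξ k)) j k) * (auxSwap j).permMatrix ℂ := by
  rw [PEquiv.toMatrix_toPEquiv_mul, PEquiv.mul_toMatrix_toPEquiv, ← Lop_submatrix_auxSwap η ξ hkj,
    submatrix_submatrix, auxSwap_symm]
  congr 1
  funext p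
  simp [auxSwap_auxSwap]

lemma Lop_mul_permMatrix_auxSwap (η : ℂ) (ξ : Fin M → ℂ) {j k : Fin M} (hkj : k ≠ j) (lam : ℂ) :
    Lop M η ξ k lam * (auxSwap j).permMatrix ℂ =
      (auxSwap j).permMatrix ℂ * (1 ⊗ₖ twoSite (Rmat η (lam - ξ k)) j k) := by
  rw [PEquiv.toMatrix_toPEquiv_mul, PEquiv.mul_toMatrix_toPEquiv, ← Lop_submatrix_auxSwap η ξ hkj,
    submatrix_submatrix, auxSwap_symm]
  congr 1
  funext p
  simp [auxSwap_auxSwap]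

lemma commute_one_kronecker_Lop (η : ℂ) (ξ : Fin M → ℂ) {m : Fin M} (lam : ℂ)
    {Z : Matrix (Spins M) (Spins M) ℂ} (hZ : ∀ P, Commute Z (pauliAt M P m)) :
    Commute (1 ⊗ₖ Z) (Lop M η ξ m lam) :=
  commute_one_kronecker fun a b => hZ ((Rmat η (lam - ξ m)).submatrix (Prod.mk a) (Prod.mk b))

lemma kron0_eq_kronecker (P : Matrix (Fin 2) (Fin 2) ℂ) :
    (kron0 P : Matrix (Fin 2 × Spins M) (Fin 2 × Spins M) ℂ) = P ⊗ₖ 1 := by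
  ext p q
  simp [kron0, one_apply]

lemma ptrace0_smul (c : ℂ) (X : Matrix (Fin 2 × Spins M) (Fin 2 × Spins M) ℂ) :
    ptrace0 (c • X) = c • ptrace0 X := by
  ext s t
  simp [ptrace0, mul_add]

lemma ptrace0_one_kronecker_mul (Z : Matrix (Spins M) (Spins M) ℂ)
    (X : Matrix (Fin 2 × Spins M) (Fin 2 × Spins M) ℂ) :
    ptrace0 ((1 ⊗ₖ Z) * X) = Z * ptrace0 X := by
  ext s t
  simp [ptrace0, mul_apply, Fintype.sum_prod_type, one_apply, mul_add, Finset.sum_add_distrib]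

lemma ptrace0_mul_one_kronecker (X : Matrix (Fin 2 × Spins M) (Fin 2 × Spins M) ℂ)
    (Z : Matrix (Spins M) (Spins M) ℂ) :
    ptrace0 (X * (1 ⊗ₖ Z)) = ptrace0 X * Z := by
  ext s t
  simp [ptrace0, mul_apply, Fintype.sum_prod_type, one_apply, add_mul, Finset.sum_add_distrib]

lemma ptrace0_kron0_mul_permMatrix_auxSwap (P : Matrix (Fin 2) (Fin 2) ℂ) (j : Fin M) :
    ptrace0 (kron0 P * (auxSwap j).permMatrix ℂ) = pauliAt M P j := by
  ext s t
  rw [PEquiv.mul_toMatrix_toPEquiv, auxSwap_symm]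
  by_cases h : ∀ k, ¬k = j → s k = t k
  · have hs : ∀ i, s = Function.update t j i ↔ s j = i := fun i => by
      rw [Function.eq_update_iff, and_iff_left h]
    simp only [pauliAt, if_pos h, mul_one]
    simp [ptrace0, kron0, auxSwap_apply, hs]
  · simp [ptrace0, kron0, pauliAt, auxSwap_apply, Function.eq_update_iff, h]

lemma transfer_eq_ptrace0 (η : ℂ) (ξ : Fin M → ℂ) (μ : ℂ) :
    transfer M η ξ μ = ptrace0 (Tmono M η ξ μ) := by
  ext s t
  simp [transfer, transferK, Aop, Dop, ptrace0]

section Strings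

variable [NeZero M] (η : ℂ) (ξ : Fin M → ℂ)

lemma Tmono_eq_descProd (lam : ℂ) :
    Tmono M η ξ lam = descProd (fun r : ℕ => Lop M η ξ r lam) 0 M := by
  have h : List.ofFn (fun m : Fin M => Lop M η ξ m lam) =
      (List.range M).map (fun r : ℕ => Lop M η ξ r lam) := by
    refine List.ext_getElem (by simp) fun i hi _ => ?_
    simpa using congrArg (Lop M η ξ · lam) (Fin.cast_val_eq_self ⟨i, by simpa using hi⟩).symm
  rw [Tmono, h, descProd, Nat.sub_zero, ← List.range_eq_range', List.map_reverse]

/-- `R_{kr}(ξ_k - ξ_r)` on the sites `k, r` of `H`. Sites are numbered from `0`, and `k : ℕ` is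
read in `Fin M` modulo `M`. -/
def siteR (k r : ℕ) : Matrix (Spins M) (Spins M) ℂ :=
  twoSite (Rmat η (ξ (k : Fin M) - ξ (r : Fin M))) (k : Fin M) (r : Fin M)

def upperString (k n : ℕ) : Matrix (Spins M) (Spins M) ℂ := descProd (siteR η ξ k) n M

def lowerString (k i : ℕ) : Matrix (Spins M) (Spins M) ℂ := descProd (siteR η ξ k) 0 i

variable {η ξ}

lemma natCast_ne_natCast {x y : ℕ} (hx : x < M) (hy : y < M) (h : x ≠ y) :
    (x : Fin M) ≠ y := by
  rwa [Ne, Fin.ext_iff, Fin.val_cast_of_lt hx, Fin.val_cast_of_lt hy]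

lemma natCast_ne {r : ℕ} {m : Fin M} (hr : r < M) (h : r ≠ m) : (r : Fin M) ≠ m := by
  rw [← Fin.cast_val_eq_self m]
  exact natCast_ne_natCast hr m.isLt h

lemma siteR_val (j : Fin M) (r : ℕ) :
    siteR η ξ j r = twoSite (Rmat η (ξ j - ξ r)) j (r : Fin M) := by
  simp [siteR]

lemma exists_siteR_mul_siteR_eq_smul_one {k r : ℕ} (hk : k < M) (hr : r < M) (hkr : k ≠ r) :
    ∃ c : ℂ, siteR η ξ k r * siteR η ξ r k = c • 1 := by
  rw [siteR, siteR, ← neg_sub (ξ (k : Fin M))]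
  exact ⟨_, twoSite_Rmat_mul_twoSite_Rmat η _ (natCast_ne_natCast hk hr hkr)⟩

lemma commute_siteR {k r k' r' : ℕ} (hk : k < M) (hr : r < M) (hk' : k' < M) (hr' : r' < M)
    (h₁ : k ≠ k') (h₂ : k ≠ r') (h₃ : r ≠ k') (h₄ : r ≠ r') :
    Commute (siteR η ξ k r) (siteR η ξ k' r') :=
  (twoSite_supportedIn _ _ _).commute (twoSite_supportedIn _ _ _) (by
    simp [natCast_ne_natCast hk' hk h₁.symm, natCast_ne_natCast hk' hr h₃.symm,
      natCast_ne_natCast hr' hk h₂.symm, natCast_ne_natCast hr' hr h₄.symm])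

lemma commute_pauliAt_siteR (P : Matrix (Fin 2) (Fin 2) ℂ) {m : Fin M} {k r : ℕ}
    (hk : k < M) (hr : r < M) (hmk : m.val ≠ k) (hmr : m.val ≠ r) :
    Commute (pauliAt M P m) (siteR η ξ k r) :=
  (pauliAt_supportedIn P m).commute (twoSite_supportedIn _ _ _) (by
    simp [(natCast_ne hk (Ne.symm hmk)).symm, (natCast_ne hr (Ne.symm hmr)).symm])

lemma upperString_eq_mul {k n : ℕ} (hn : n < M) :
    upperString η ξ k n = upperString η ξ k (n + 1) * siteR η ξ k n := by
  rw [upperString, upperString, ← descProd_mul_descProd _ n.le_succ hn, descProd_succ_self]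

lemma lowerString_succ (k i : ℕ) :
    lowerString η ξ k (i + 1) = siteR η ξ k i * lowerString η ξ k i := by
  rw [lowerString, lowerString, ← descProd_mul_descProd _ (Nat.zero_le i) i.le_succ,
    descProd_succ_self]

lemma Tmono_self (j : Fin M) :
    Tmono M η ξ (ξ j) =
      descProd (fun r : ℕ => Lop M η ξ r (ξ j)) (j + 1) M *
        (Complex.sinh η • (auxSwap j).permMatrix ℂ) *
          descProd (fun r : ℕ => Lop M η ξ r (ξ j)) 0 j := by
  rw [Tmono_eq_descProd, descProd_eq_mul_mul _ (Nat.zero_le _) j.isLt]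
  simp only [Fin.cast_val_eq_self, Lop_self]

lemma permMatrix_auxSwap_mul_descProd (j : Fin M) :
    (auxSwap j).permMatrix ℂ * descProd (fun r : ℕ => Lop M η ξ r (ξ j)) 0 j =
      (1 ⊗ₖ lowerString η ξ j j) * (auxSwap j).permMatrix ℂ := by
  rw [lowerString, one_kronecker_descProd]
  refine semiconjBy_descProd fun r _ hr => ?_
  rw [siteR_val]
  exact permMatrix_auxSwap_mul_Lop η ξ (natCast_ne (hr.trans j.isLt) hr.ne) (ξ j)

lemma descProd_mul_permMatrix_auxSwap (j : Fin M) :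
    descProd (fun r : ℕ => Lop M η ξ r (ξ j)) (j + 1) M * (auxSwap j).permMatrix ℂ =
      (auxSwap j).permMatrix ℂ * (1 ⊗ₖ upperString η ξ j (j + 1)) := by
  rw [upperString, one_kronecker_descProd]
  refine (semiconjBy_descProd fun r hr hrM => ?_).eq.symm
  rw [siteR_val]
  exact (Lop_mul_permMatrix_auxSwap η ξ (natCast_ne (m := j) hrM (by omega)) (ξ j)).symm

lemma commute_one_kronecker_lowerString (j : Fin M) :
    Commute (1 ⊗ₖ lowerString η ξ j j) (descProd (fun r : ℕ => Lop M η ξ r (ξ j)) (j + 1) M) := by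
  refine commute_descProd fun r hr hrM => commute_one_kronecker_Lop η ξ (ξ j) fun Q => ?_
  have hval : ((r : Fin M) : ℕ) = r := Fin.val_cast_of_lt hrM
  exact (commute_descProd fun r' _ hr' =>
    commute_pauliAt_siteR Q j.isLt (hr'.trans j.isLt) (by omega) (by omega)).symm

lemma ptrace0_kron0_mul_Tmono (P : Matrix (Fin 2) (Fin 2) ℂ) (j : Fin M) :
    ptrace0 (kron0 P * Tmono M η ξ (ξ j)) =
      Complex.sinh η • (lowerString η ξ j j * (pauliAt M P j * upperString η ξ j (j + 1))) := by
  have hkron : Commute (kron0 P) (1 ⊗ₖ lowerString η ξ j j) := by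
    rw [kron0_eq_kronecker, Commute, SemiconjBy, ← mul_kronecker_mul, ← mul_kronecker_mul]
    simp
  calc ptrace0 (kron0 P * Tmono M η ξ (ξ j))
      = Complex.sinh η • ptrace0 (kron0 P * (descProd (fun r : ℕ => Lop M η ξ r (ξ j)) (j + 1) M *
          ((auxSwap j).permMatrix ℂ * descProd (fun r : ℕ => Lop M η ξ r (ξ j)) 0 j))) := by
        rw [Tmono_self, ← ptrace0_smul]
        simp only [mul_smul_comm, smul_mul_assoc, mul_assoc]
    _ = Complex.sinh η • ptrace0 ((1 ⊗ₖ lowerString η ξ j j) *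
          (kron0 P * (auxSwap j).permMatrix ℂ) * (1 ⊗ₖ upperString η ξ j (j + 1))) := by
        rw [permMatrix_auxSwap_mul_descProd, ← mul_assoc (descProd _ _ _),
          ← (commute_one_kronecker_lowerString j).eq, mul_assoc, descProd_mul_permMatrix_auxSwap,
          ← mul_assoc (kron0 P), hkron.eq]
        simp only [mul_assoc]
    _ = _ := by
        rw [ptrace0_mul_one_kronecker, ptrace0_one_kronecker_mul,
          ptrace0_kron0_mul_permMatrix_auxSwap, mul_assoc]

lemma transfer_eq_smul {n : ℕ} (hn : n < M) :
    transfer M η ξ (ξ n) = Complex.sinh η • (lowerString η ξ n n * upperString η ξ n (n + 1)) := by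
  have h := ptrace0_kron0_mul_Tmono (η := η) (ξ := ξ) 1 (n : Fin M)
  rwa [kron0_eq_kronecker, one_kronecker_one, one_mul, ← transfer_eq_ptrace0, pauliAt_one, one_mul,
    Fin.val_cast_of_lt hn] at h

lemma exists_prod_upperString_mul_lowerString_eq_smul {n : ℕ} (hn : n < M) :
    ∀ i ≤ n, ∃ c : ℂ, ((List.range i).map (upperString η ξ · n)).prod * lowerString η ξ n i =
      c • ((List.range i).map (upperString η ξ · (n + 1))).prod := by
  intro i
  induction i with
  | zero => exact fun _ => ⟨1, by simp [lowerString]⟩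
  | succ i ih =>
    intro hi
    obtain ⟨c, hc⟩ := ih (by omega)
    obtain ⟨c', hc'⟩ :=
      exists_siteR_mul_siteR_eq_smul_one (η := η) (ξ := ξ) (by omega : i < M) hn (by omega)
    have hcomm : Commute (upperString η ξ i (n + 1)) (lowerString η ξ n i) := by
      refine commute_descProd fun r' _ hr' => (commute_descProd fun r hr hrM => ?_).symm
      exact commute_siteR hn (by omega) (by omega) hrM (by omega) (by omega) (by omega) (by omega)
    refine ⟨c * c', ?_⟩
    -- `R_{i,n}` ends the `i`-th string and cancels against `R_{n,i}` by unitarity.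
    calc ((List.range (i + 1)).map (upperString η ξ · n)).prod * lowerString η ξ n (i + 1)
        = ((List.range i).map (upperString η ξ · n)).prod *
            (upperString η ξ i (n + 1) * (siteR η ξ i n * siteR η ξ n i) *
              lowerString η ξ n i) := by
          rw [List.prod_range_succ, lowerString_succ, upperString_eq_mul hn]
          simp only [mul_assoc]
      _ = c' • (((List.range i).map (upperString η ξ · n)).prod * lowerString η ξ n i *
            upperString η ξ i (n + 1)) := by
          rw [hc', mul_smul_comm, mul_one, smul_mul_assoc, mul_smul_comm, hcomm.eq, mul_assoc]
      _ = _ := by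
          rw [hc, smul_mul_assoc, smul_smul, ← List.prod_range_succ, mul_comm c']

lemma exists_prod_transfer_eq_smul {n : ℕ} (hn : n ≤ M) :
    ∃ c : ℂ, ((List.range n).map fun k : ℕ => transfer M η ξ (ξ k)).prod =
      c • ((List.range n).map (upperString η ξ · n)).prod := by
  induction n with
  | zero => exact ⟨1, by simp⟩
  | succ n ih =>
    obtain ⟨c, hc⟩ := ih (by omega)
    obtain ⟨c', hc'⟩ :=
      exists_prod_upperString_mul_lowerString_eq_smul (η := η) (ξ := ξ) hn n le_rfl
    refine ⟨c * Complex.sinh η * c', ?_⟩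
    rw [List.prod_range_succ, List.prod_range_succ, hc, transfer_eq_smul hn, smul_mul_smul,
      ← mul_assoc, hc', smul_mul_assoc, smul_smul]

lemma commute_pauliAt_prod_upperString (P : Matrix (Fin 2) (Fin 2) ℂ) (j : Fin M) :
    Commute (pauliAt M P j) ((List.range j).map (upperString η ξ · (j + 1))).prod := by
  refine Commute.list_prod_right _ _ fun X hX => ?_
  obtain ⟨k, hk, rfl⟩ := List.mem_map.1 hX
  rw [List.mem_range] at hk
  exact commute_descProd fun r hr hrM =>
    commute_pauliAt_siteR P (by omega) hrM (by omega) (by omega)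

lemma ofFn_transfer_eq_map_range {n : ℕ} (h : ∀ k : Fin n, (k : ℕ) < M) :
    List.ofFn (fun k : Fin n => transfer M η ξ (ξ ⟨k, h k⟩)) =
      (List.range n).map fun k : ℕ => transfer M η ξ (ξ k) := by
  refine List.ext_getElem (by simp) fun i hi _ => ?_
  simp only [List.getElem_ofFn, List.getElem_map, List.getElem_range]
  congr
  exact (Nat.mod_eq_of_lt (h ⟨i, by simpa using hi⟩)).symm

end Strings

end QuantumInverseScattering

open QuantumInverseScattering in
theorem quantum_inverse_scattering_general (M : ℕ) (η : ℂ) (ξ : Fin M → ℂ)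
    (j : Fin M) (P : Matrix (Fin 2) (Fin 2) ℂ) :
    (List.ofFn (fun k : Fin j.val =>
        transfer M η ξ (ξ ⟨k.val, k.isLt.trans j.isLt⟩))).prod *
      ptrace0 (kron0 P * Tmono M η ξ (ξ j)) =
    pauliAt M P j *
      (List.ofFn (fun k : Fin (j.val + 1) =>
        transfer M η ξ (ξ ⟨k.val, Nat.lt_of_lt_of_le k.isLt j.isLt⟩))).prod := by
  have : NeZero M := ⟨j.pos.ne'⟩
  obtain ⟨c, hc⟩ := exists_prod_transfer_eq_smul (η := η) (ξ := ξ) j.isLt.le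
  obtain ⟨c', hc'⟩ :=
    exists_prod_upperString_mul_lowerString_eq_smul (η := η) (ξ := ξ) j.isLt j le_rfl
  rw [ofFn_transfer_eq_map_range, ofFn_transfer_eq_map_range, List.prod_range_succ, hc,
    ptrace0_kron0_mul_Tmono, transfer_eq_smul j.isLt]
  simp only [smul_mul_assoc, mul_smul_comm]
  rw [← mul_assoc _ (lowerString η ξ j j), hc', ← mul_assoc _ (lowerString η ξ j j), hc',
    smul_mul_assoc, smul_mul_assoc, mul_smul_comm, (commute_pauliAt_prod_upperString P j).left_comm]

/-- Solution of the quantum inverse scattering problem: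
`∏_{k=1}^{j-1} 𝒯(ξ_k) · tr_0[(σ^α ⊗ Id) T(ξ_j)] = σ^α_j · ∏_{k=1}^{j} 𝒯(ξ_k)`. -/
theorem quantum_inverse_scattering (M : ℕ) (hM : 1 ≤ M) (η : ℂ) (ξ : Fin M → ℂ)
    (j : Fin M) (P : Matrix (Fin 2) (Fin 2) ℂ)
    (hP : P = sigmaX ∨ P = sigmaY ∨ P = sigmaZ) :
    (List.ofFn (fun k : Fin j.val =>
        transfer M η ξ (ξ ⟨k.val, k.isLt.trans j.isLt⟩))).prod *
      ptrace0 (kron0 P * Tmono M η ξ (ξ j)) =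
    pauliAt M P j *
      (List.ofFn (fun k : Fin (j.val + 1) =>
        transfer M η ξ (ξ ⟨k.val, Nat.lt_of_lt_of_le k.isLt j.isLt⟩))).prod :=
  quantum_inverse_scattering_general M η ξ j P
end
end

section
/- (Hyperbolic Cauchy determinant.) Let N ≥ 1 and λ1,…,λN, μ1,…,μN ∈ ℂ with sinh(μk−λj) ≠ 0 for all j,k. Then det_N(1/sinh(μk−λj)) = ∏_{N ≥ a > b ≥ 1} [sinh(λa−λb) sinh(μb−μa)] / ∏_{a,b=1}^{N} sinh(μb−λa). -/
open Complex Matrix BigOperators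

noncomputable section

/-!
Put `x = e^{2λ}` and `y = e^{2μ}`. Then `sinh (μ - λ) = e^{-λ} e^{-μ} (y - x) / 2`, so the matrix is
the rational Cauchy matrix `1 / (y_k - x_j)` rescaled by rows and columns, and each `sinh` in the
formula is the corresponding difference times the same kind of factors. The rational Cauchy
determinant is proved by induction: subtracting multiples of row `0` to clear column `0` leaves,
up to row and column factors, the Cauchy matrix of the remaining points, because
`(y₀ - x_j)(y_k - x₀) - (y₀ - x₀)(y_k - x_j) = (x_j - x₀)(y₀ - y_k)`.
-/

theorem Fin.prod_prod_ite_lt_succ {M : Type*} [CommMonoid M] {n : ℕ}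
    (f : Fin (n + 1) → Fin (n + 1) → M) :
    (∏ a, ∏ b, if b.val < a.val then f a b else 1) =
      (∏ a : Fin n, f a.succ 0) *
        ∏ a : Fin n, ∏ b : Fin n, if b.val < a.val then f a.succ b.succ else 1 := by
  simp [Fin.prod_univ_succ, Finset.prod_mul_distrib]

theorem Fin.prod_prod_ite_lt_mul_mul_prod {M : Type*} [CommMonoid M] {n : ℕ} (w : Fin n → M) :
    (∏ a, ∏ b, if b.val < a.val then w a * w b else 1) * ∏ c, w c = (∏ c, w c) ^ n := by
  induction n with
  | zero => simp
  | succ n ih =>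
    rw [Fin.prod_prod_ite_lt_succ, Fin.prod_univ_succ, Finset.prod_mul_distrib, Finset.prod_const,
      Finset.card_univ, Fintype.card_fin]
    calc _ = (∏ a : Fin n, w a.succ) * w 0 ^ (n + 1) *
          ((∏ a : Fin n, ∏ b : Fin n, if b.val < a.val then w a.succ * w b.succ else 1) *
            ∏ a : Fin n, w a.succ) := by rw [pow_succ]; ac_rfl
      _ = _ := by rw [ih, mul_pow, pow_succ' (∏ a : Fin n, w a.succ)]; ac_rfl

section Cauchy

variable {K : Type*} [Field K]

def cauchyMatrix {n : Type*} (x y : n → K) : Matrix n n K := of fun j k => (y k - x j)⁻¹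

theorem det_cauchyMatrix_succ_mul {n : ℕ} (x y : Fin (n + 1) → K)
    (h : ∀ j k, y k - x j ≠ 0) :
    (cauchyMatrix x y).det *
        ((y 0 - x 0) * (∏ j : Fin n, (y 0 - x j.succ)) * ∏ k : Fin n, (y k.succ - x 0)) =
      (∏ j : Fin n, (x j.succ - x 0)) * (∏ k : Fin n, (y 0 - y k.succ)) *
        (cauchyMatrix (fun j : Fin n => x j.succ) (fun k : Fin n => y k.succ)).det := by
  set C := cauchyMatrix x y
  set c : Fin (n + 1) → K := fun i => if i = 0 then 0 else (y 0 - x 0) / (y 0 - x i)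
  set B : Matrix (Fin (n + 1)) (Fin (n + 1)) K := of fun i k => C i k - c i * C 0 k
  have hCB : C.det = B.det :=
    det_eq_of_forall_row_eq_smul_add_const c 0 (by simp [c]) fun i k => by simp [B, c]
  have hcol : ∀ i : Fin n, B i.succ 0 = 0 := fun i => by
    have := h i.succ 0
    have := h 0 0
    simp only [cauchyMatrix, of_apply, Fin.succ_ne_zero, ↓reduceIte, B, C, c]
    field_simp
    ring
  have hB : B.det = (y 0 - x 0)⁻¹ * (B.submatrix Fin.succ Fin.succ).det := by
    rw [det_succ_column_zero, Fin.sum_univ_succ]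
    simp only [hcol, mul_zero, zero_mul, Finset.sum_const_zero, add_zero]
    simp [B, c, C, cauchyMatrix]
  have hminor : B.submatrix Fin.succ Fin.succ = of fun j k =>
      (x j.succ - x 0) / (y 0 - x j.succ) *
        of (fun j k => (y 0 - y k.succ) / (y k.succ - x 0) *
          cauchyMatrix (fun j : Fin n => x j.succ) (fun k : Fin n => y k.succ) j k) j k := by
    ext j k
    have := h j.succ k.succ
    have := h 0 k.succ
    have := h j.succ 0
    simp only [cauchyMatrix, of_apply, submatrix_apply, Fin.succ_ne_zero, ↓reduceIte, B, C, c]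
    field_simp
    ring
  rw [hCB, hB, hminor, det_mul_column, det_mul_row, Finset.prod_div_distrib,
    Finset.prod_div_distrib]
  have := h 0 0
  have : ∏ j : Fin n, (y 0 - x j.succ) ≠ 0 := Finset.prod_ne_zero_iff.mpr fun j _ => h j.succ 0
  have : ∏ k : Fin n, (y k.succ - x 0) ≠ 0 := Finset.prod_ne_zero_iff.mpr fun k _ => h 0 k.succ
  field_simp

theorem det_cauchyMatrix_mul_prod {n : ℕ} (x y : Fin n → K) (h : ∀ j k, y k - x j ≠ 0) :
    (cauchyMatrix x y).det * ∏ a, ∏ b, (y b - x a) =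
      ∏ a, ∏ b, if b.val < a.val then (x a - x b) * (y b - y a) else 1 := by
  induction n with
  | zero => simp
  | succ n ih =>
    have hstep := det_cauchyMatrix_succ_mul x y h
    rw [Fin.prod_prod_ite_lt_succ, ← ih (fun j => x j.succ) (fun k => y k.succ) fun j k => h _ _]
    simp only [Fin.prod_univ_succ, Finset.prod_mul_distrib]
    linear_combination (∏ a : Fin n, ∏ b : Fin n, (y b.succ - x a.succ)) * hstep

theorem det_of_inv_mul_mul_sub_mul_prod {n : ℕ} (u v x y : Fin n → K)
    (h : ∀ j k, u j * v k * (y k - x j) ≠ 0) :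
    (of fun j k => (u j * v k * (y k - x j))⁻¹).det * ∏ a, ∏ b, u a * v b * (y b - x a) =
      ∏ a, ∏ b, if b.val < a.val then
        u a * v a * (u b * v b) * ((x a - x b) * (y b - y a)) else 1 := by
  have hu : ∏ a, u a ≠ 0 := Finset.prod_ne_zero_iff.mpr fun a _ =>
    left_ne_zero_of_mul (left_ne_zero_of_mul (h a a))
  have hv : ∏ a, v a ≠ 0 := Finset.prod_ne_zero_iff.mpr fun a _ =>
    right_ne_zero_of_mul (left_ne_zero_of_mul (h a a))
  have hdet : (of fun j k => (u j * v k * (y k - x j))⁻¹).det =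
      (∏ j, (u j)⁻¹) * ((∏ k, (v k)⁻¹) * (cauchyMatrix x y).det) := by
    rw [← det_mul_row, ← det_mul_column]
    congr 1
    ext j k
    simp only [_root_.mul_inv_rev, of_apply, cauchyMatrix]
    ring
  have hden : ∏ a, ∏ b, u a * v b * (y b - x a) =
      (∏ a, u a) ^ n * (∏ b, v b) ^ n * ∏ a, ∏ b, (y b - x a) := by
    simp only [Finset.prod_mul_distrib, Finset.prod_const, Finset.card_univ, Fintype.card_fin,
      Finset.prod_pow]
  have hnum : (∏ a, ∏ b, if b.val < a.val then
        u a * v a * (u b * v b) * ((x a - x b) * (y b - y a)) else 1) =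
      (∏ a, ∏ b, if b.val < a.val then u a * v a * (u b * v b) else 1) *
        ∏ a, ∏ b, if b.val < a.val then (x a - x b) * (y b - y a) else 1 := by
    simp only [← Finset.prod_mul_distrib]
    refine Finset.prod_congr rfl fun a _ => Finset.prod_congr rfl fun b _ => ?_
    split_ifs <;> simp
  have hw := Fin.prod_prod_ite_lt_mul_mul_prod fun c => u c * v c
  rw [Finset.prod_mul_distrib] at hw
  rw [hdet, hden, hnum, ← det_cauchyMatrix_mul_prod x y fun j k => right_ne_zero_of_mul (h j k),
    Finset.prod_inv_distrib, Finset.prod_inv_distrib, ← mul_pow, ← hw]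
  field_simp

end Cauchy

theorem Complex.sinh_sub_eq_exp_mul (z w : ℂ) :
    sinh (w - z) = exp (-z) * (exp (-w) / 2) * (exp (2 * w) - exp (2 * z)) := by
  have e1 : exp (-z) * exp (-w) * exp (2 * w) = exp (w - z) := by
    rw [← exp_add, ← exp_add]; ring_nf
  have e2 : exp (-z) * exp (-w) * exp (2 * z) = exp (-(w - z)) := by
    rw [← exp_add, ← exp_add]; ring_nf
  rw [sinh, ← e1, ← e2]
  ring

theorem cauchy_determinant_general (N : ℕ) (lam mu : Fin N → ℂ)
    (h : ∀ j k : Fin N, Complex.sinh (mu k - lam j) ≠ 0) :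
    (Matrix.of fun j k : Fin N => 1 / Complex.sinh (mu k - lam j)).det =
      (∏ a : Fin N, ∏ b : Fin N, if b.val < a.val then
          Complex.sinh (lam a - lam b) * Complex.sinh (mu b - mu a) else 1) /
        (∏ a : Fin N, ∏ b : Fin N, Complex.sinh (mu b - lam a)) := by
  have hden : ∏ a, ∏ b, sinh (mu b - lam a) ≠ 0 :=
    Finset.prod_ne_zero_iff.mpr fun a _ => Finset.prod_ne_zero_iff.mpr fun b _ => h a b
  simp only [one_div, sinh_sub_eq_exp_mul] at h hden ⊢
  rw [eq_div_iff hden, det_of_inv_mul_mul_sub_mul_prod _ _ _ _ h]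
  refine Finset.prod_congr rfl fun a _ => Finset.prod_congr rfl fun b _ => ?_
  split_ifs
  · ring
  · rfl

/-- The hyperbolic Cauchy determinant. -/
theorem cauchy_determinant (N : ℕ) (hN : 1 ≤ N) (lam mu : Fin N → ℂ)
    (h : ∀ j k : Fin N, Complex.sinh (mu k - lam j) ≠ 0) :
    (Matrix.of fun j k : Fin N => 1 / Complex.sinh (mu k - lam j)).det =
      (∏ a : Fin N, ∏ b : Fin N, if b.val < a.val then
          Complex.sinh (lam a - lam b) * Complex.sinh (mu b - mu a) else 1) /
        (∏ a : Fin N, ∏ b : Fin N, Complex.sinh (mu b - lam a)) :=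
  cauchy_determinant_general N lam mu h

end
end

section
/- Let M ≥ 2 and 1 ≤ m ≤ M−1. The map κ ↦ Q^κ_{1,m+1} − Q^κ_{1,m} − Q^κ_{2,m+1} + Q^κ_{2,m} is a polynomial in κ with operator coefficients, and its second derivative with respect to κ evaluated at κ = 1 equals (1/2)(1−σ^z_1)(1−σ^z_{m+1}) as an operator on H = (ℂ²)^{⊗M}. -/
open Complex Matrix BigOperators

noncomputable section

/-!
Each factor `(1+κ)/2 + ((1-κ)/2) σ^z_n` is diagonal, equal to `1` on an up spin and to `κ` on a
down spin, so `Q^κ_{i,m}` is diagonal with entry `κ^N` where `N` counts the down spins among the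
sites `i, …, m`. With `N` the count on sites `2, …, m` and `a, b ∈ {0, 1}` the spins at sites `1`
and `m+1`, the combination has entry `κ^N (κ^a - 1)(κ^b - 1) = a b (κ - 1)² κ^N`, a polynomial
whose second derivative at `κ = 1` is `2 a b`, the entry of `(1/2)(1-σ^z_1)(1-σ^z_{m+1})`.
-/

open Polynomial

theorem Matrix.exists_sum_range_smul_eq_map_eval {R m n : Type*} [CommSemiring R]
    [Fintype m] [Fintype n] (A : Matrix m n R[X]) :
    ∃ (d : ℕ) (P : ℕ → Matrix m n R), ∀ x : R,
      A.map (eval x) = ∑ k ∈ Finset.range (d + 1), x ^ k • P k := by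
  refine ⟨Finset.univ.sup fun ij : m × n => (A ij.1 ij.2).natDegree,
    fun k => A.map (coeff · k), fun x => ?_⟩
  ext i j
  have hdeg : (A i j).natDegree < Finset.univ.sup (fun ij : m × n => (A ij.1 ij.2).natDegree) + 1 :=
    Nat.lt_add_one_iff.mpr (Finset.le_sup (f := fun ij : m × n => (A ij.1 ij.2).natDegree)
      (Finset.mem_univ (i, j)))
  simp only [map_apply, sum_apply, smul_apply, smul_eq_mul, eval_eq_sum_range' hdeg, mul_comm]

theorem Polynomial.iteratedDeriv_eval {𝕜 : Type*} [NontriviallyNormedField 𝕜] (p : 𝕜[X])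
    (k : ℕ) : iteratedDeriv k (fun x => p.eval x) = fun x => (derivative^[k] p).eval x := by
  induction k with
  | zero => simp
  | succ k ih =>
    ext x
    rw [iteratedDeriv_succ, ih, Polynomial.deriv, Function.iterate_succ_apply']

theorem Polynomial.iteratedDeriv_two_eval_sq_mul {𝕜 : Type*} [NontriviallyNormedField 𝕜]
    (p : 𝕜[X]) (a : 𝕜) :
    iteratedDeriv 2 (fun x => ((X - C a) ^ 2 * p).eval x) a = 2 * p.eval a := by
  rw [iteratedDeriv_eval]
  simp [derivative_mul, derivative_pow]

theorem Matrix.list_prod_map_diagonal {ι n α : Type*} [Fintype n] [DecidableEq n]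
    [CommSemiring α] (l : List ι) (d : ι → n → α) :
    (l.map fun i => diagonal (d i)).prod = diagonal (l.map d).prod := by
  induction l with
  | nil => simp
  | cons i l ih => simp [ih]

def siteRange (M i j : ℕ) : Finset (Fin M) :=
  Finset.univ.filter fun n => i ≤ n.val + 1 ∧ n.val + 1 ≤ j

-- `s n = 1` is the down spin, where `σ^z = -1`.
def downCount {M : ℕ} (S : Finset (Fin M)) (s : Spins M) : ℕ :=
  ∑ n ∈ S, (s n : ℕ)

theorem downCount_siteRange_succ_right {M i j : ℕ} (hij : i ≤ j + 1) (hj : j < M) (s : Spins M) :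
    downCount (siteRange M i (j + 1)) s = downCount (siteRange M i j) s + s ⟨j, hj⟩ := by
  have : siteRange M i (j + 1) = insert ⟨j, hj⟩ (siteRange M i j) := by
    ext n; simp [siteRange, Fin.ext_iff]; omega
  rw [downCount, this, Finset.sum_insert (by simp [siteRange]), add_comm]
  rfl

theorem downCount_siteRange_succ_left {M i j : ℕ} (hij : i + 1 ≤ j) (hi : i < M) (s : Spins M) :
    downCount (siteRange M (i + 1) j) s = s ⟨i, hi⟩ + downCount (siteRange M (i + 2) j) s := by
  have : siteRange M (i + 1) j = insert ⟨i, hi⟩ (siteRange M (i + 2) j) := by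
    ext n; simp [siteRange, Fin.ext_iff]; omega
  rw [downCount, this, Finset.sum_insert (by simp [siteRange])]
  rfl

theorem sigmaZ_eq_diagonal : sigmaZ = diagonal ![1, -1] := by
  ext a b
  fin_cases a <;> fin_cases b <;> simp [sigmaZ]

theorem pauliAt_diagonal (M : ℕ) (d : Fin 2 → ℂ) (n : Fin M) :
    pauliAt M (diagonal d) n = diagonal fun s => d (s n) := by
  ext s t
  by_cases hst : s = t
  · simp [pauliAt, hst]
  · rw [diagonal_apply_ne _ hst, pauliAt]
    by_cases hn : s n = t n
    · rw [if_neg fun h => hst (funext fun k => if hk : k = n then hk ▸ hn else h k hk), mul_zero]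
    · rw [diagonal_apply_ne _ hn, zero_mul]

theorem siteFactor_eq_diagonal (M : ℕ) (κ : ℂ) (n : Fin M) :
    ((1 + κ) / 2) • (1 : Matrix (Spins M) (Spins M) ℂ) + ((1 - κ) / 2) • pauliAt M sigmaZ n =
      diagonal fun s => κ ^ (s n : ℕ) := by
  rw [sigmaZ_eq_diagonal, pauliAt_diagonal, ← diagonal_one, ← diagonal_smul, ← diagonal_smul,
    diagonal_add]
  congr 1
  ext s
  suffices ∀ a : Fin 2, (1 + κ) / 2 + (1 - κ) / 2 * ![1, -1] a = κ ^ (a : ℕ) by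
    simpa using this (s n)
  intro a
  fin_cases a <;> simp <;> ring

theorem Qop_eq_diagonal (M : ℕ) (κ : ℂ) (i j : ℕ) :
    Qop M κ i j = diagonal fun s => κ ^ downCount (siteRange M i j) s := by
  simp only [Qop, siteFactor_eq_diagonal]
  rw [list_prod_map_diagonal, ((Finset.sort_perm_toList _ _).map _).prod_eq,
    Finset.prod_map_toList]
  congr 1
  funext s
  rw [Finset.prod_apply, downCount, Finset.prod_pow_eq_pow_sum]
  rfl

def pairDownPoly {M : ℕ} (i j : Fin M) (S : Finset (Fin M)) :
    Matrix (Spins M) (Spins M) ℂ[X] :=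
  diagonal fun s => C (((s i : ℕ) * (s j : ℕ) : ℕ) : ℂ) * X ^ downCount S s

theorem pow_add_add_sub_sub_add_fin_two {R : Type*} [CommRing R] (x : R) (a b : Fin 2) (N : ℕ) :
    x ^ (a + N + b : ℕ) - x ^ (a + N : ℕ) - x ^ (N + b : ℕ) + x ^ N =
      (((a : ℕ) * (b : ℕ) : ℕ) : R) * (x - 1) ^ 2 * x ^ N := by
  have hpow : ∀ c : Fin 2, x ^ (c : ℕ) - 1 = (c : ℕ) * (x - 1) := by
    intro c
    fin_cases c <;> simp
  calc x ^ (a + N + b : ℕ) - x ^ (a + N : ℕ) - x ^ (N + b : ℕ) + x ^ N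
      = (x ^ (a : ℕ) - 1) * (x ^ (b : ℕ) - 1) * x ^ N := by ring
    _ = (((a : ℕ) * (b : ℕ) : ℕ) : R) * (x - 1) ^ 2 * x ^ N := by
      rw [hpow, hpow]
      push_cast
      ring

theorem Qop_combination_eq_map_eval {M m : ℕ} (hm1 : 1 ≤ m) (hm : m < M) (κ : ℂ) :
    Qop M κ 1 (m + 1) - Qop M κ 1 m - Qop M κ 2 (m + 1) + Qop M κ 2 m =
      ((X - C (1 : ℂ)) ^ 2 • pairDownPoly ⟨0, by omega⟩ ⟨m, hm⟩ (siteRange M 2 m)).map (eval κ) := by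
  simp only [Qop_eq_diagonal, pairDownPoly, ← diagonal_smul, diagonal_sub, diagonal_add]
  rw [diagonal_map (by simp)]
  congr 1
  funext s
  rw [downCount_siteRange_succ_right (by omega) hm, downCount_siteRange_succ_right (by omega) hm]
  have hleft : downCount (siteRange M 1 m) s = s ⟨0, _⟩ + downCount (siteRange M 2 m) s :=
    downCount_siteRange_succ_left (i := 0) hm1 (by omega) s
  rw [hleft]
  simp only [pow_add_add_sub_sub_add_fin_two, Pi.smul_apply, smul_eq_mul, eval_mul, eval_pow,
    eval_sub, eval_X, eval_C]
  ring

theorem eval_one_pairDownPoly {M : ℕ} (i j : Fin M) (S : Finset (Fin M)) (s t : Spins M) :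
    (pairDownPoly i j S s t).eval 1 =
      (1 / 4 : ℂ) * ((1 - pauliAt M sigmaZ i) * (1 - pauliAt M sigmaZ j)) s t := by
  rw [pairDownPoly, sigmaZ_eq_diagonal, pauliAt_diagonal, pauliAt_diagonal, ← diagonal_one,
    diagonal_sub, diagonal_sub, diagonal_mul_diagonal]
  by_cases hst : s = t
  · have h : ∀ a : Fin 2, (1 : ℂ) - ![1, -1] a = 2 * (a : ℕ) := by
      intro a
      fin_cases a <;> norm_num
    simp only [hst, diagonal_apply_eq, eval_mul, eval_C, eval_pow, eval_X, one_pow, mul_one, h]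
    push_cast
    ring
  · simp [hst]

/-- The combination `Q^κ_{1,m+1} - Q^κ_{1,m} - Q^κ_{2,m+1} + Q^κ_{2,m}` is a polynomial in `κ`
with operator coefficients, and its second `κ`-derivative at `κ = 1` equals
`(1/2)(1-σ^z_1)(1-σ^z_{m+1})`. -/
theorem second_kappa_derivative_of_generating_operator (M : ℕ)
    (m : ℕ) (hm1 : 1 ≤ m) (hm : m ≤ M - 1) :
    ∃ (d : ℕ) (P : ℕ → Matrix (Spins M) (Spins M) ℂ),
      (∀ κ : ℂ,
        Qop M κ 1 (m + 1) - Qop M κ 1 m - Qop M κ 2 (m + 1) + Qop M κ 2 m =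
          ∑ k ∈ Finset.range (d + 1), κ ^ k • P k) ∧
      (∀ s t : Spins M,
        iteratedDeriv 2
            (fun κ : ℂ =>
              (Qop M κ 1 (m + 1) - Qop M κ 1 m - Qop M κ 2 (m + 1) + Qop M κ 2 m) s t) 1 =
          (((1 : ℂ) / 2) •
            ((1 - pauliAt M sigmaZ ⟨0, by omega⟩) * (1 - pauliAt M sigmaZ ⟨m, by omega⟩)))
            s t) := by
  have hmM : m < M := by omega
  have hcomb := Qop_combination_eq_map_eval hm1 hmM
  obtain ⟨d, P, hP⟩ := Matrix.exists_sum_range_smul_eq_map_eval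
    ((X - C (1 : ℂ)) ^ 2 • pairDownPoly ⟨0, by omega⟩ ⟨m, hmM⟩ (siteRange M 2 m))
  refine ⟨d, P, fun κ => (hcomb κ).trans (hP κ), fun s t => ?_⟩
  simp only [hcomb, map_apply, Matrix.smul_apply, smul_eq_mul, iteratedDeriv_two_eval_sq_mul]
  rw [eval_one_pairDownPoly]
  ring

end
end

section
/- Let κ ∈ ℂ, n ≥ 2, and let λ1,…,λn, μ1,…,μn ∈ ℂ satisfy sinh(λj−μk) ≠ 0, sinh(λj−μk+η) ≠ 0 and sinh(μk−λj+η) ≠ 0 for all j,k. Suppose there exist indices a ≠ b in {1,…,n} and p ∈ {1,…,M} such that μa = ξp and μb = ξp − η. Then det_n Ω_κ({λ},{μ}|{λ}) = 0. -/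
open Complex Matrix BigOperators

noncomputable section

/-!
At `μ_a = ξ_p` the factor `d(μ_a)` vanishes, so column `a` of `Ω_κ` is a multiple of
`j ↦ t(λ_j, ξ_p)`. At `μ_b = ξ_p - η` the factor `a(μ_b)` vanishes, and
`t(ξ_p - η, λ_j) = t(λ_j, ξ_p)`, so column `b` is a multiple of the same vector.
Two proportional columns force the determinant to vanish.
-/

theorem Matrix.det_eq_zero_of_cols_eq_smul {n R : Type*} [Fintype n] [DecidableEq n]
    [CommRing R] (A : Matrix n n R) {a b : n} (hab : a ≠ b) (f : n → R) (c₁ c₂ : R)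
    (ha : ∀ i, A i a = c₁ * f i) (hb : ∀ i, A i b = c₂ * f i) : A.det = 0 := by
  have hA : A = ((A.updateCol b f).updateCol a (c₁ • f)).updateCol b (c₂ • f) := by
    ext i j
    by_cases hjb : j = b
    · subst hjb; simp [hb]
    by_cases hja : j = a
    · subst hja; simp [hjb, ha]
    · simp [hja, hjb]
  have hf : ((A.updateCol b f).updateCol a (c₁ • f)).updateCol b f =
      (A.updateCol b f).updateCol a (c₁ • f) := by
    ext i j
    by_cases hjb : j = b
    · subst hjb; simp [hab.symm]
    · simp [hjb]
  rw [hA, det_updateCol_smul, hf, det_updateCol_smul,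
    det_zero_of_column_eq hab fun i => by simp [hab.symm], mul_zero, mul_zero]

theorem dF_inhomogeneity (M : ℕ) (ξ : Fin M → ℂ) (p : Fin M) : dF M ξ (ξ p) = 0 :=
  Finset.prod_eq_zero (Finset.mem_univ p) (by simp)

theorem aF_inhomogeneity_sub (M : ℕ) (η : ℂ) (ξ : Fin M → ℂ) (p : Fin M) :
    aF M η ξ (ξ p - η) = 0 :=
  Finset.prod_eq_zero (Finset.mem_univ p) (by simp)

theorem tfun_sub_left (η lam μ : ℂ) : tfun η (μ - η) lam = tfun η lam μ := by
  rw [tfun, tfun, show μ - η - lam = -(lam - μ + η) by ring,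
    show -(lam - μ + η) + η = -(lam - μ) by ring, sinh_neg, sinh_neg, neg_mul_neg, mul_comm]

section OmegaColumns

variable (M : ℕ) (η : ℂ) (ξ : Fin M → ℂ) (κ : ℂ) {n n' : ℕ}
  (lam mu : Fin n → ℂ) (nu : Fin n' → ℂ) (p : Fin M) (j k : Fin n)

theorem Omega_apply_of_eq_inhomogeneity (hk : mu k = ξ p) :
    Omega M η ξ κ lam mu nu j k =
      (aF M η ξ (ξ p) * ∏ i, sinh (nu i - ξ p + η)) * tfun η (lam j) (ξ p) := by
  rw [Omega, hk, dF_inhomogeneity]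
  ring

theorem Omega_apply_of_eq_inhomogeneity_sub (hk : mu k = ξ p - η) :
    Omega M η ξ κ lam mu nu j k =
      (-κ * dF M ξ (ξ p - η) * ∏ i, sinh (nu i - ξ p)) * tfun η (lam j) (ξ p) := by
  have hshift : ∀ i, nu i - (ξ p - η) - η = nu i - ξ p := fun i => by ring
  rw [Omega, hk, aF_inhomogeneity_sub, tfun_sub_left]
  simp only [hshift]
  ring

end OmegaColumns

theorem det_Omega_vanishes_on_pair_general (M : ℕ) (η : ℂ) (ξ : Fin M → ℂ) (κ : ℂ)
    (n : ℕ) (lam mu : Fin n → ℂ)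
    (a b : Fin n) (hab : a ≠ b) (p : Fin M)
    (ha : mu a = ξ p) (hb : mu b = ξ p - η) :
    (Omega M η ξ κ lam mu lam).det = 0 :=
  (Omega M η ξ κ lam mu lam).det_eq_zero_of_cols_eq_smul hab (fun j => tfun η (lam j) (ξ p)) _ _
    (fun j => Omega_apply_of_eq_inhomogeneity M η ξ κ lam mu lam p j a ha)
    (fun j => Omega_apply_of_eq_inhomogeneity_sub M η ξ κ lam mu lam p j b hb)

/-- If the set `{μ}` contains a pair `μ_a = ξ_p`, `μ_b = ξ_p - η`, then
`det Ω_κ({λ},{μ}|{λ}) = 0`. -/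
theorem det_Omega_vanishes_on_pair (M : ℕ) (η : ℂ) (ξ : Fin M → ℂ) (κ : ℂ)
    (n : ℕ) (hn : 2 ≤ n) (lam mu : Fin n → ℂ)
    (h1 : ∀ j k : Fin n, Complex.sinh (lam j - mu k) ≠ 0)
    (h2 : ∀ j k : Fin n, Complex.sinh (lam j - mu k + η) ≠ 0)
    (h3 : ∀ j k : Fin n, Complex.sinh (mu k - lam j + η) ≠ 0)
    (a b : Fin n) (hab : a ≠ b) (p : Fin M)
    (ha : mu a = ξ p) (hb : mu b = ξ p - η) :
    (Omega M η ξ κ lam mu lam).det = 0 :=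
  det_Omega_vanishes_on_pair_general M η ξ κ n lam mu a b hab p ha hb

end
end

section
/- Let Q < P be positive integers, η = iπQ/P, κ ∈ ℂ, and n ≥ P. Let λ1,…,λn, μ1,…,μn ∈ ℂ satisfy sinh(λj−μk) ≠ 0, sinh(λj−μk+η) ≠ 0 and sinh(μk−λj+η) ≠ 0 for all j,k. Suppose there exist P distinct indices a1,…,aP ∈ {1,…,n} such that sinh(λ_{a_{j+1}} − λ_{a_j} + η) = 0 for j = 1,…,P, with the cyclic convention λ_{a_{P+1}} := λ_{a_1}. Then det_n Ω_κ({λ},{μ}|{λ}) = 0. -/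
open Complex Matrix BigOperators

noncomputable section

/-!
Fix a column `k` and write `x_j = λ_{a_j} - μ_k`. Both `t(λ, μ)` and `t(μ, λ)` are differences
of hyperbolic cotangents, `t(λ, μ) = coth x - coth (x + η)` and `t(μ, λ) = coth (x - η) - coth x`,
while the remaining factors of `Ω_{jk}` depend on `k` only. Since `coth` has period `iπ`, the
string condition gives `coth (x_{j+1} + η) = coth x_j`, so each of these sums over the cycle
`a_1, …, a_P` is zero. Hence the rows of `Ω` indexed by the string add up to zero.
-/

namespace Complex

/-- The hyperbolic cotangent; it is `0` at the zeros of `sinh`. -/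
def coth (z : ℂ) : ℂ := cosh z / sinh z

theorem coth_neg (z : ℂ) : coth (-z) = -coth z := by
  simp only [coth, cosh_neg, sinh_neg, div_neg]

theorem coth_add_of_sinh_eq_zero (z : ℂ) {w : ℂ} (hw : sinh w = 0) : coth (z + w) = coth z := by
  have hcosh : cosh w ≠ 0 := fun h => by simpa [h, hw] using cosh_sq_sub_sinh_sq w
  rw [coth, coth, sinh_add, cosh_add, hw, mul_zero, mul_zero, add_zero, add_zero,
    mul_div_mul_right _ _ hcosh]

theorem sinh_sub_div_mul_sinh {x y : ℂ} (hx : sinh x ≠ 0) (hy : sinh y ≠ 0) :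
    sinh (y - x) / (sinh x * sinh y) = coth x - coth y := by
  rw [sinh_sub, coth, coth]
  field_simp

end Complex

theorem Matrix.det_eq_zero_of_sum_rows_eq_zero {ι R : Type*} [Fintype ι] [DecidableEq ι]
    [CommRing R] [IsDomain R] (A : Matrix ι ι R) {s : Finset ι} (hs : s.Nonempty)
    (h : ∀ k, ∑ i ∈ s, A i k = 0) : A.det = 0 := by
  refine Matrix.exists_vecMul_eq_zero_iff.mp ⟨fun i => if i ∈ s then 1 else 0, ?_, ?_⟩
  · obtain ⟨i, hi⟩ := hs
    exact fun hv => by simpa [hi] using congrFun hv i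
  · ext k
    simpa [Matrix.vecMul, dotProduct, Finset.sum_ite_mem] using h k

theorem cyc_eq_add_one {P : ℕ} [NeZero P] (j : Fin P) : cyc j = j + 1 := by
  simp only [cyc, Fin.ext_iff, Fin.val_add, Fin.val_one', Nat.add_mod_mod]

theorem sum_comp_cyc {β : Type*} [AddCommMonoid β] {P : ℕ} (f : Fin P → β) :
    ∑ j, f (cyc j) = ∑ j, f j := by
  rcases Nat.eq_zero_or_pos P with rfl | hP
  · simp
  · have : NeZero P := ⟨hP.ne'⟩
    simp only [cyc_eq_add_one]
    exact Fintype.sum_equiv (Equiv.addRight 1) _ _ fun _ => rfl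

theorem tfun_eq_coth_sub_coth {η x y : ℂ} (h0 : sinh (x - y) ≠ 0) (hη : sinh (x - y + η) ≠ 0) :
    tfun η x y = coth (x - y) - coth (x - y + η) := by
  rw [tfun, ← sinh_sub_div_mul_sinh h0 hη, add_sub_cancel_left]

theorem sum_coth_add_eq_of_sinh_cyc_eq_zero {P : ℕ} {η : ℂ} (x : Fin P → ℂ)
    (hx : ∀ j, sinh (x (cyc j) - x j + η) = 0) :
    ∑ j, coth (x j + η) = ∑ j, coth (x j) := by
  rw [← sum_comp_cyc fun j => coth (x j + η)]
  refine Finset.sum_congr rfl fun j _ => ?_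
  rw [← coth_add_of_sinh_eq_zero (x j) (hx j)]
  ring_nf

theorem sum_Omega_rows_eq_zero_of_string (M : ℕ) (ξ : Fin M → ℂ) (η κ : ℂ) {n P : ℕ}
    (lam mu : Fin n → ℂ) (a : Fin P → Fin n)
    (hstring : ∀ j : Fin P, sinh (lam (a (cyc j)) - lam (a j) + η) = 0) (k : Fin n)
    (h1 : ∀ j, sinh (lam j - mu k) ≠ 0) (h2 : ∀ j, sinh (lam j - mu k + η) ≠ 0)
    (h3 : ∀ j, sinh (mu k - lam j + η) ≠ 0) :
    ∑ j, Omega M η ξ κ lam mu lam (a j) k = 0 := by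
  set x : Fin P → ℂ := fun j => lam (a j) - mu k
  have hx : ∀ j, sinh (x (cyc j) - x j + η) = 0 := fun j => by
    simpa only [x, sub_sub_sub_cancel_right] using hstring j
  have hplus : ∑ j, coth (x j + η) = ∑ j, coth (x j) :=
    sum_coth_add_eq_of_sinh_cyc_eq_zero x hx
  have hminus : ∑ j, coth (x j - η) = ∑ j, coth (x j) := by
    simpa only [sub_add_cancel] using
      (sum_coth_add_eq_of_sinh_cyc_eq_zero (η := η) (fun j => x j - η)
        fun j => by simpa only [sub_sub_sub_cancel_right] using hx j).symm
  have hleft : ∀ j, tfun η (lam (a j)) (mu k) = coth (x j) - coth (x j + η) := fun j =>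
    tfun_eq_coth_sub_coth (h1 _) (h2 _)
  have hright : ∀ j, tfun η (mu k) (lam (a j)) = coth (x j - η) - coth (x j) := fun j => by
    have h0 : sinh (mu k - lam (a j)) ≠ 0 := by
      rw [← neg_sub, sinh_neg, neg_ne_zero]; exact h1 _
    rw [tfun_eq_coth_sub_coth h0 (h3 _), ← neg_sub (lam (a j)), coth_neg,
      show -(lam (a j) - mu k) + η = -(x j - η) by ring, coth_neg]
    ring
  simp only [Omega, hleft, hright, mul_sub, Finset.sum_sub_distrib, ← Finset.mul_sum,
    ← Finset.sum_mul, hplus, hminus]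
  ring

theorem det_Omega_vanishes_on_string_general (M : ℕ) (ξ : Fin M → ℂ) (Q P : ℕ)
    (hQ : 0 < Q) (hQP : Q < P) (η : ℂ)
    (κ : ℂ) (n : ℕ) (lam mu : Fin n → ℂ)
    (h1 : ∀ j k : Fin n, Complex.sinh (lam j - mu k) ≠ 0)
    (h2 : ∀ j k : Fin n, Complex.sinh (lam j - mu k + η) ≠ 0)
    (h3 : ∀ j k : Fin n, Complex.sinh (mu k - lam j + η) ≠ 0)
    (a : Fin P → Fin n) (ha : Function.Injective a)
    (hstring : ∀ j : Fin P, Complex.sinh (lam (a (cyc j)) - lam (a j) + η) = 0) :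
    (Omega M η ξ κ lam mu lam).det = 0 := by
  have hP : 0 < P := hQ.trans hQP
  refine (Omega M η ξ κ lam mu lam).det_eq_zero_of_sum_rows_eq_zero
    (s := Finset.univ.image a) (Finset.univ_nonempty_iff.mpr ⟨⟨0, hP⟩⟩ |>.image a) fun k => ?_
  rw [Finset.sum_image fun _ _ _ _ h => ha h]
  exact sum_Omega_rows_eq_zero_of_string M ξ η κ lam mu a hstring k
    (fun j => h1 j k) (fun j => h2 j k) (fun j => h3 j k)

/-- At a root of unity (`η = iπQ/P`), if `{λ}` contains a `P`-string then
`det Ω_κ({λ},{μ}|{λ}) = 0`. -/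
theorem det_Omega_vanishes_on_string (M : ℕ) (ξ : Fin M → ℂ) (Q P : ℕ)
    (hQ : 0 < Q) (hQP : Q < P) (η : ℂ) (hη : η = Complex.I * Real.pi * Q / P)
    (κ : ℂ) (n : ℕ) (hn : P ≤ n) (lam mu : Fin n → ℂ)
    (h1 : ∀ j k : Fin n, Complex.sinh (lam j - mu k) ≠ 0)
    (h2 : ∀ j k : Fin n, Complex.sinh (lam j - mu k + η) ≠ 0)
    (h3 : ∀ j k : Fin n, Complex.sinh (mu k - lam j + η) ≠ 0)
    (a : Fin P → Fin n) (ha : Function.Injective a)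
    (hstring : ∀ j : Fin P, Complex.sinh (lam (a (cyc j)) - lam (a j) + η) = 0) :
    (Omega M η ξ κ lam mu lam).det = 0 :=
  det_Omega_vanishes_on_string_general M ξ Q P hQ hQP η κ n lam mu h1 h2 h3 a ha hstring

end
end

section
/- Let κ ∈ ℂ, N ≥ 1, and let μ1,…,μN ∈ ℂ with sinh(μa−μb) ≠ 0 for a ≠ b, and λ1,…,λN ∈ ℂ such that sinh(μk−λj) ≠ 0, sinh(μk−λj+η) ≠ 0 and sinh(λj−μk+η) ≠ 0 for all j,k. Define vk = ∏_{a=1}^{N} sinh(μk−λa) / ∏_{a≠k} sinh(μk−μa). Then for every j ∈ {1,…,N}: Σ_{k=1}^{N} vk · (Ω_κ)_{kj}({μ},{λ}|{μ}) = Y_κ(λj|{λ}). In particular, if λ1,…,λN satisfy the Bethe equations Y_1(λj|{λ}) = 0 for all j, then Σ_{k=1}^{N} vk · (Ω_κ)_{kj}({μ},{λ}|{μ}) = (1−κ) a(λj) ∏_{a=1}^{N} sinh(λa−λj+η). -/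
open Complex Matrix BigOperators

noncomputable section

/-!
Writing `sinh (u - v) = ½ e^{-u} e^{-v} (e^{2u} - e^{2v})`, the sums over `k` are, up to a
common gauge factor, sums of residues of the rational function
`R(z) = ∏ₐ (z - e^{2λₐ}) / ∏ₐ (z - e^{2μₐ})`, whose partial-fraction expansion comes from
Lagrange interpolation. The kernel `t(μₖ, z)` is a difference of two simple fractions in
`e^{2μₖ}`, so `∑ₖ vₖ t(μₖ, z)` telescopes to `R` at `z - η` minus `R` at `z`; at the node
`z = λⱼ` the second term vanishes. Doing this for both terms of `Ω_κ` (shifts `±η`) gives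
exactly `Y_κ(λⱼ|{λ})`, and the Bethe equations then eliminate the `d`-term.
-/

section

open Finset Function

variable {F ι : Type*} [Field F] [Fintype ι]

theorem prod_sub_div_prod_sub_comm (a c : ι → F) (b : F) :
    (∏ i, (a i - b)) / ∏ i, (c i - b) = (∏ i, (b - a i)) / ∏ i, (b - c i) := by
  simp only [← prod_div_distrib, ← neg_sub b, neg_div_neg_eq]

variable [DecidableEq ι]

def residueWeight {α : Type*} (s : α → α → F) (μ ν : ι → α) (k : ι) : F :=
  (∏ a, s (μ k) (ν a)) / ∏ a ∈ univ.erase k, s (μ k) (μ a)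

open Polynomial Lagrange in
theorem prod_sub_div_prod_sub_eq_one_add_sum {x : ι → F} (hx : Injective x) (l : ι → F)
    {z : F} (hz : ∀ i, z ≠ x i) :
    (∏ i, (z - l i)) / ∏ i, (z - x i) = 1 + ∑ i, residueWeight (· - ·) x l i / (z - x i) := by
  have hQz : ∏ i, (z - x i) ≠ 0 := prod_ne_zero_iff.mpr fun i _ => sub_ne_zero.mpr (hz i)
  have hdeg : (nodal univ l - nodal univ x).degree < #(univ : Finset ι) := by
    rw [← degree_nodal (v := l)]
    exact degree_sub_lt_left (by rw [degree_nodal, degree_nodal]) nodal_ne_zero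
      (by rw [nodal_monic.leadingCoeff, nodal_monic.leadingCoeff])
  have key := congrArg (Polynomial.eval z) (eq_interpolate hx.injOn hdeg)
  rw [eval_interpolate_not_at_node _ fun i _ => hz i, eval_sub, eval_nodal, eval_nodal] at key
  simp only [eval_sub, eval_nodal_at_node (mem_univ _), sub_zero, eval_nodal] at key
  rw [div_eq_iff hQz, add_mul, one_mul, ← sub_eq_iff_eq_add', key, mul_comm]
  congr 1
  refine sum_congr rfl fun i _ => ?_
  rw [residueWeight, nodalWeight, prod_inv_distrib]
  ring

theorem sum_residueWeight_mul_sub_div {x : ι → F} (hx : Injective x) (l : ι → F) {z w : F}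
    (hz : ∀ i, z ≠ x i) (hw : ∀ i, w ≠ x i) :
    ∑ k, residueWeight (· - ·) x l k * ((z - w) / ((x k - z) * (x k - w))) =
      (∏ a, (l a - w)) / ∏ a, (x a - w) - (∏ a, (l a - z)) / ∏ a, (x a - z) := by
  have term : ∀ k, residueWeight (· - ·) x l k * ((z - w) / ((x k - z) * (x k - w))) =
      residueWeight (· - ·) x l k / (w - x k) - residueWeight (· - ·) x l k / (z - x k) := by
    intro k
    have := sub_ne_zero.mpr (hz k)
    have := sub_ne_zero.mpr (hw k)
    have := sub_ne_zero.mpr (hz k).symm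
    have := sub_ne_zero.mpr (hw k).symm
    field_simp
    ring
  rw [sum_congr rfl fun k _ => term k, sum_sub_distrib, prod_sub_div_prod_sub_comm _ _ w,
    prod_sub_div_prod_sub_comm _ _ z, prod_sub_div_prod_sub_eq_one_add_sum hx l hz,
    prod_sub_div_prod_sub_eq_one_add_sum hx l hw]
  ring

def IsGaugedDifference {α : Type*} (s : α → α → F) : Prop :=
  ∃ (c : F) (f g : α → F), c ≠ 0 ∧ (∀ u, g u ≠ 0) ∧ ∀ u v, s u v = c * g u * g v * (f u - f v)

theorem IsGaugedDifference.sum_residueWeight_mul_div {α : Type*} {s : α → α → F}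
    (hs : IsGaugedDifference s) {μ : ι → α} (hμ : Pairwise fun a b => s (μ a) (μ b) ≠ 0)
    (ν : ι → α) {z w : α} (hz : ∀ k, s (μ k) z ≠ 0) (hw : ∀ k, s (μ k) w ≠ 0) :
    ∑ k, residueWeight s μ ν k * (s z w / (s (μ k) z * s (μ k) w)) =
      (∏ a, s (ν a) w) / ∏ a, s (μ a) w - (∏ a, s (ν a) z) / ∏ a, s (μ a) z := by
  obtain ⟨c, f, g, hc, hg, hs⟩ := hs
  have f_ne : ∀ {u v}, s u v ≠ 0 → f v ≠ f u := fun h h' =>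
    h (by rw [hs, h', sub_self, mul_zero])
  have hgμ : ∏ a, g (μ a) ≠ 0 := prod_ne_zero_iff.mpr fun a _ => hg _
  set G := (∏ a, g (ν a)) / ∏ a, g (μ a)
  have ratio : ∀ w, (∀ a, f w ≠ f (μ a)) →
      (∏ a, s (ν a) w) / ∏ a, s (μ a) w =
        G * ((∏ a, ((f ∘ ν) a - f w)) / ∏ a, ((f ∘ μ) a - f w)) := by
    intro w hw
    have : ∏ a, (f (μ a) - f w) ≠ 0 :=
      prod_ne_zero_iff.mpr fun a _ => sub_ne_zero.mpr (hw a).symm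
    have := hg w
    simp only [hs, prod_mul_distrib, prod_const, G, Function.comp_apply]
    field_simp
  have weight : ∀ k, residueWeight s μ ν k * (s z w / (s (μ k) z * s (μ k) w)) =
      G * (residueWeight (· - ·) (f ∘ μ) (f ∘ ν) k *
        ((f z - f w) / (((f ∘ μ) k - f z) * ((f ∘ μ) k - f w)))) := by
    intro k
    have := sub_ne_zero.mpr (f_ne (hz k)).symm
    have := sub_ne_zero.mpr (f_ne (hw k)).symm
    have : ∏ a ∈ univ.erase k, (f (μ k) - f (μ a)) ≠ 0 := prod_ne_zero_iff.mpr fun a ha =>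
      sub_ne_zero.mpr (f_ne (hμ (ne_of_mem_erase ha)))
    have := hg (μ k)
    have := hg z
    have := hg w
    simp only [residueWeight, hs, prod_mul_distrib, prod_const, G, Function.comp_apply,
      ← prod_erase_mul _ _ (mem_univ k)]
    field_simp
  rw [sum_congr rfl fun k _ => weight k, ← mul_sum,
    sum_residueWeight_mul_sub_div (x := f ∘ μ)
      (fun a b h => by_contra fun hab => f_ne (hμ hab) h.symm) _
      (fun k => f_ne (hz k)) (fun k => f_ne (hw k)),
    ratio w fun k => f_ne (hw k), ratio z fun k => f_ne (hz k), mul_sub]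

end

theorem isGaugedDifference_sinh : IsGaugedDifference fun u v : ℂ => sinh (u - v) := by
  refine ⟨2⁻¹, fun u => exp u ^ 2, fun u => exp (-u), by norm_num, fun u => exp_ne_zero _,
    fun u v => ?_⟩
  dsimp only
  have h := two_sinh (u - v)
  rw [neg_sub, exp_sub, exp_sub] at h
  rw [exp_neg, exp_neg]
  field_simp at h ⊢
  linear_combination h

section Sinh

variable {ι : Type*} [Fintype ι] [DecidableEq ι] {μ : ι → ℂ}

theorem sum_residueWeight_sinh_mul_div_of_node (hμ : Pairwise fun a b => sinh (μ a - μ b) ≠ 0)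
    (ν : ι → ℂ) (j : ι) {w : ℂ} (hz : ∀ k, sinh (μ k - ν j) ≠ 0)
    (hw : ∀ k, sinh (μ k - w) ≠ 0) :
    ∑ k, residueWeight (fun u v => sinh (u - v)) μ ν k *
        (sinh (ν j - w) / (sinh (μ k - ν j) * sinh (μ k - w))) =
      (∏ a, sinh (ν a - w)) / ∏ a, sinh (μ a - w) := by
  rw [isGaugedDifference_sinh.sum_residueWeight_mul_div hμ ν hz hw,
    Finset.prod_eq_zero (f := fun a => sinh (ν a - ν j)) (Finset.mem_univ j)
      (by rw [sub_self, sinh_zero]), zero_div, sub_zero]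

theorem sum_residueWeight_sinh_mul_tfun_left (hμ : Pairwise fun a b => sinh (μ a - μ b) ≠ 0)
    (ν : ι → ℂ) (j : ι) {η : ℂ} (hz : ∀ k, sinh (μ k - ν j) ≠ 0)
    (hw : ∀ k, sinh (μ k - ν j + η) ≠ 0) :
    ∑ k, residueWeight (fun u v => sinh (u - v)) μ ν k * tfun η (μ k) (ν j) =
      (∏ a, sinh (ν a - ν j + η)) / ∏ a, sinh (μ a - ν j + η) := by
  have := sum_residueWeight_sinh_mul_div_of_node hμ ν j hz (w := ν j - η)
    (by simpa only [← sub_add] using hw)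
  simpa only [tfun, sub_sub_cancel, ← sub_add] using this

theorem sum_residueWeight_sinh_mul_tfun_right (hμ : Pairwise fun a b => sinh (μ a - μ b) ≠ 0)
    (ν : ι → ℂ) (j : ι) {η : ℂ} (hz : ∀ k, sinh (μ k - ν j) ≠ 0)
    (hw : ∀ k, sinh (ν j - μ k + η) ≠ 0) :
    ∑ k, residueWeight (fun u v => sinh (u - v)) μ ν k * tfun η (ν j) (μ k) =
      -((∏ a, sinh (ν a - ν j - η)) / ∏ a, sinh (μ a - ν j - η)) := by
  have flip : ∀ k, μ k - ν j - η = -(ν j - μ k + η) := fun k => by ring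
  have := sum_residueWeight_sinh_mul_div_of_node hμ ν j hz (w := ν j + η)
    (by simpa only [← sub_sub, flip, sinh_neg, neg_ne_zero] using hw)
  have kernel : ∀ k, sinh (-η) / (sinh (μ k - ν j) * sinh (μ k - ν j - η)) =
      -tfun η (ν j) (μ k) := by
    intro k
    rw [tfun, flip, ← neg_sub (ν j) (μ k)]
    simp only [sinh_neg]
    ring
  simp only [← sub_sub, sub_self, zero_sub, kernel, mul_neg, Finset.sum_neg_distrib] at this
  rw [← this, neg_neg]

end Sinh

theorem sum_residueWeight_sinh_mul_Omega {M N : ℕ} (η : ℂ) (ξ : Fin M → ℂ) (κ : ℂ)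
    {mu : Fin N → ℂ} (hmu : Pairwise fun a b => sinh (mu a - mu b) ≠ 0) (lam : Fin N → ℂ)
    (j : Fin N) (h1 : ∀ k, sinh (mu k - lam j) ≠ 0) (h2 : ∀ k, sinh (mu k - lam j + η) ≠ 0)
    (h3 : ∀ k, sinh (lam j - mu k + η) ≠ 0) :
    ∑ k, residueWeight (fun u v => sinh (u - v)) mu lam k * Omega M η ξ κ mu lam mu k j =
      Yk M η ξ κ lam (lam j) := by
  have hup : ∏ a, sinh (mu a - lam j + η) ≠ 0 := Finset.prod_ne_zero_iff.mpr fun a _ => h2 a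
  have hdown : ∏ a, sinh (mu a - lam j - η) ≠ 0 := Finset.prod_ne_zero_iff.mpr fun a _ => by
    rw [show mu a - lam j - η = -(lam j - mu a + η) by ring, sinh_neg, neg_ne_zero]
    exact h3 a
  calc ∑ k, residueWeight (fun u v => sinh (u - v)) mu lam k * Omega M η ξ κ mu lam mu k j
      = aF M η ξ (lam j) * (∏ a, sinh (mu a - lam j + η)) *
            ∑ k, residueWeight (fun u v => sinh (u - v)) mu lam k * tfun η (mu k) (lam j) -
          κ * dF M ξ (lam j) * (∏ a, sinh (mu a - lam j - η)) *
            ∑ k, residueWeight (fun u v => sinh (u - v)) mu lam k * tfun η (lam j) (mu k) := by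
        simp only [Omega, Finset.mul_sum, ← Finset.sum_sub_distrib]
        exact Finset.sum_congr rfl fun k _ => by ring
    _ = Yk M η ξ κ lam (lam j) := by
        rw [sum_residueWeight_sinh_mul_tfun_left hmu lam j h1 h2,
          sum_residueWeight_sinh_mul_tfun_right hmu lam j h1 h3, Yk]
        field_simp
        ring

theorem Omega_row_combination_general (M N : ℕ) (η : ℂ) (ξ : Fin M → ℂ) (κ : ℂ)
    (mu lam : Fin N → ℂ)
    (hmu : ∀ a b : Fin N, a ≠ b → Complex.sinh (mu a - mu b) ≠ 0)
    (h1 : ∀ j k : Fin N, Complex.sinh (mu k - lam j) ≠ 0)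
    (h2 : ∀ j k : Fin N, Complex.sinh (mu k - lam j + η) ≠ 0)
    (h3 : ∀ j k : Fin N, Complex.sinh (lam j - mu k + η) ≠ 0) :
    let v : Fin N → ℂ := fun k =>
      (∏ a, Complex.sinh (mu k - lam a)) /
        ∏ a ∈ Finset.univ.erase k, Complex.sinh (mu k - mu a)
    (∀ j : Fin N, ∑ k : Fin N, v k * Omega M η ξ κ mu lam mu k j = Yk M η ξ κ lam (lam j)) ∧
      ((∀ j : Fin N, Yk M η ξ 1 lam (lam j) = 0) →
        ∀ j : Fin N, ∑ k : Fin N, v k * Omega M η ξ κ mu lam mu k j =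
          (1 - κ) * aF M η ξ (lam j) * ∏ a, Complex.sinh (lam a - lam j + η)) := by
  intro v
  have row : ∀ j, ∑ k, v k * Omega M η ξ κ mu lam mu k j = Yk M η ξ κ lam (lam j) := fun j =>
    sum_residueWeight_sinh_mul_Omega η ξ κ (fun a b => hmu a b) lam j (h1 j) (h2 j) (h3 j)
  refine ⟨row, fun bethe j => ?_⟩
  have := bethe j
  rw [row j]
  simp only [Yk] at this ⊢
  linear_combination κ * this

/-- Linear combination of the rows of `Ω_κ({μ},{λ}|{μ})` with coefficients `v_k` gives
`Y_κ(λ_j|{λ})`; in particular, on a solution of the (untwisted) Bethe equations it gives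
`(1-κ) a(λ_j) ∏_a sinh(λ_a - λ_j + η)`. -/
theorem Omega_row_combination (M N : ℕ) (hN : 1 ≤ N) (η : ℂ) (ξ : Fin M → ℂ) (κ : ℂ)
    (mu lam : Fin N → ℂ)
    (hmu : ∀ a b : Fin N, a ≠ b → Complex.sinh (mu a - mu b) ≠ 0)
    (h1 : ∀ j k : Fin N, Complex.sinh (mu k - lam j) ≠ 0)
    (h2 : ∀ j k : Fin N, Complex.sinh (mu k - lam j + η) ≠ 0)
    (h3 : ∀ j k : Fin N, Complex.sinh (lam j - mu k + η) ≠ 0) :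
    let v : Fin N → ℂ := fun k =>
      (∏ a, Complex.sinh (mu k - lam a)) /
        ∏ a ∈ Finset.univ.erase k, Complex.sinh (mu k - mu a)
    (∀ j : Fin N, ∑ k : Fin N, v k * Omega M η ξ κ mu lam mu k j = Yk M η ξ κ lam (lam j)) ∧
      ((∀ j : Fin N, Yk M η ξ 1 lam (lam j) = 0) →
        ∀ j : Fin N, ∑ k : Fin N, v k * Omega M η ξ κ mu lam mu k j =
          (1 - κ) * aF M η ξ (lam j) * ∏ a, Complex.sinh (lam a - lam j + η)) :=
  Omega_row_combination_general M N η ξ κ mu lam hmu h1 h2 h3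

end
end
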